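/- arXiv:2207.06009 — 11 statements merged into one kernel-verified Lean document; each statement's English description precedes it below -/
import Mathlib

section
/- Let G=(V,E) be a connected undirected graph on V={1,…,n}, and for each i let A_i ∈ ℝ^{m×d_i} be a matrix of full row rank m. Then S_1 + S_2 + ⋯ + S_n = Null(A), i.e., the subspaces S_i together span the whole null space of the coupling map A. -/
/-!
Modulo `⨆ i, S i`, a block `x` placed at node `a` can be pushed to a neighbour `b`: pick `z` with
`A b z = A a x` (full row rank), then `single a x - single b z ∈ S a`. Following walks in the
connected graph, every `u ∈ Null(A)` is congruent to a vector supported at one node `r`, which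
still lies in `Null(A)` and hence in `S r`.
-/

theorem Matrix.mulVec_surjective_of_rank_eq_card {K m n : Type*} [Field K] [Fintype m]
    [Fintype n] {A : Matrix m n K} (h : A.rank = Fintype.card m) :
    Function.Surjective A.mulVec := by
  refine LinearMap.range_eq_top.1
    (Submodule.eq_top_of_finrank_eq ?_ : LinearMap.range A.mulVecLin = ⊤)
  rw [Module.finrank_fintype_fun_eq_card, ← h, Matrix.rank]

namespace SimpleGraph

variable {ι R N : Type*} {M : ι → Type*} [Ring R] [AddCommGroup N] [Module R N]
  [∀ j, AddCommGroup (M j)] [∀ j, Module R (M j)]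

/-- The subspace `S_i` of the paper. -/
def closedNbhdKer (G : SimpleGraph ι) (F : (Π j, M j) →ₗ[R] N) (i : ι) :
    Submodule R (Π j, M j) :=
  LinearMap.ker F ⊓ Submodule.pi (insert i (G.neighborSet i))ᶜ fun _ => ⊥

variable {G : SimpleGraph ι} {F : (Π j, M j) →ₗ[R] N}

theorem mem_closedNbhdKer {i : ι} {u : Π j, M j} :
    u ∈ G.closedNbhdKer F i ↔ (∀ j, j ≠ i → ¬G.Adj i j → u j = 0) ∧ F u = 0 := by
  simp [closedNbhdKer, Submodule.mem_pi, and_comm]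

theorem closedNbhdKer_le_ker (i : ι) : G.closedNbhdKer F i ≤ LinearMap.ker F :=
  inf_le_left

variable [DecidableEq ι]

theorem single_mem_closedNbhdKer {i : ι} {x : M i} (hx : F (Pi.single i x) = 0) :
    Pi.single i x ∈ G.closedNbhdKer F i :=
  mem_closedNbhdKer.2 ⟨fun _ hj _ => Pi.single_eq_of_ne hj x, hx⟩

theorem single_sub_single_mem_closedNbhdKer {a b : ι} (hab : G.Adj a b) {x : M a} {z : M b}
    (h : F (Pi.single a x) = F (Pi.single b z)) :
    Pi.single a x - Pi.single b z ∈ G.closedNbhdKer F a := by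
  refine mem_closedNbhdKer.2 ⟨fun j hja hjb => ?_, by rw [map_sub, h, sub_self]⟩
  have hjb' : j ≠ b := by rintro rfl; exact hjb hab
  simp [Pi.single_eq_of_ne hja, Pi.single_eq_of_ne hjb']

theorem exists_single_sub_single_mem_iSup_closedNbhdKer
    (hsurj : ∀ j, Function.Surjective (F ∘ₗ LinearMap.single R M j)) {i r : ι}
    (hir : G.Reachable i r) (x : M i) :
    ∃ y : M r, Pi.single i x - Pi.single r y ∈ ⨆ k, G.closedNbhdKer F k := by
  obtain ⟨w⟩ := hir
  induction w with
  | nil => exact ⟨x, by simp⟩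
  | @cons a b c hab _ ih =>
    obtain ⟨z, hz⟩ := hsurj b (F (Pi.single a x))
    obtain ⟨y, hy⟩ := ih z
    have hstep := single_sub_single_mem_closedNbhdKer hab hz.symm
    exact ⟨y, sub_add_sub_cancel (Pi.single a x) (Pi.single b z) (Pi.single c y) ▸
      add_mem (Submodule.mem_iSup_of_mem a hstep) hy⟩

theorem iSup_closedNbhdKer_eq_ker [Fintype ι] (hG : G.Connected)
    (hsurj : ∀ j, Function.Surjective (F ∘ₗ LinearMap.single R M j)) :
    ⨆ i, G.closedNbhdKer F i = LinearMap.ker F := by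
  refine le_antisymm (iSup_le closedNbhdKer_le_ker) fun u hu => ?_
  set K := ⨆ i, G.closedNbhdKer F i
  obtain ⟨r⟩ := hG.nonempty
  choose y hy using fun i =>
    exists_single_sub_single_mem_iSup_closedNbhdKer hsurj (hG i r) (u i)
  have hdiff : u - Pi.single r (∑ i, y i) ∈ K := by
    rw [← LinearMap.single_apply R, map_sum, ← Finset.univ_sum_single u,
      ← Finset.sum_sub_distrib]
    exact Submodule.sum_mem _ fun i _ => hy i
  have hr : Pi.single r (∑ i, y i) ∈ K := by
    refine Submodule.mem_iSup_of_mem r (single_mem_closedNbhdKer ?_)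
    have h := iSup_le closedNbhdKer_le_ker hdiff
    rwa [LinearMap.mem_ker, map_sub, LinearMap.mem_ker.1 hu, zero_sub, neg_eq_zero] at h
  simpa using add_mem hdiff hr

end SimpleGraph

/-- Lemma `reachable`, first part.
Let `G` be a connected undirected graph on `{1,…,n}` and, for each node `i`,
let `A i : ℝ^{m × d i}` have full row rank `m`.  Let `Amap` be the coupling
map `u ↦ ∑ j, A j *ᵥ u j`, and for each node `i` let `S i` be the subspace of
vectors `u` that vanish outside the closed neighborhood of `i` and satisfy
`Amap u = 0`.  Then `S 1 + ⋯ + S n = Null(A)`. -/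
theorem stmt_0 (n m : ℕ) (d : Fin n → ℕ)
    (G : SimpleGraph (Fin n)) (hconn : G.Connected)
    (A : (i : Fin n) → Matrix (Fin m) (Fin (d i)) ℝ)
    (hrank : ∀ i, (A i).rank = m)
    (Amap : ((j : Fin n) → (Fin (d j) → ℝ)) →ₗ[ℝ] (Fin m → ℝ))
    (hAmap : ∀ u, Amap u = ∑ j, (A j).mulVec (u j))
    (S : Fin n → Submodule ℝ ((j : Fin n) → (Fin (d j) → ℝ)))
    (hS : ∀ i, (S i : Set ((j : Fin n) → (Fin (d j) → ℝ))) =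
      {u | (∀ j, j ≠ i → ¬ G.Adj i j → u j = 0) ∧ Amap u = 0}) :
    (⨆ i, S i) = LinearMap.ker Amap := by
  have hsingle : ∀ j x, Amap (Pi.single j x) = (A j).mulVec x := fun j x => by
    rw [hAmap, Finset.sum_eq_single j (fun k _ hk => by simp [Pi.single_eq_of_ne hk])
      (by simp), Pi.single_eq_same]
  have hsurj : ∀ j, Function.Surjective (Amap ∘ₗ LinearMap.single ℝ _ j) := fun j b => by
    obtain ⟨x, hx⟩ := Matrix.mulVec_surjective_of_rank_eq_card (A := A j)
      (by rw [hrank, Fintype.card_fin]) b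
    exact ⟨x, by simp [hsingle, hx]⟩
  have hS' : S = G.closedNbhdKer Amap := funext fun i => SetLike.coe_injective <| by
    ext u
    rw [hS]
    exact SimpleGraph.mem_closedNbhdKer.symm
  rw [hS']
  exact SimpleGraph.iSup_closedNbhdKer_eq_ker hconn hsurj
end

section
/- Let 𝓛 be a finite set of links and, for each ℓ∈𝓛, let T_ℓ ⊆ V = {1,…,n} be a nonempty set of transmitters. Each node j holds the variable block y_j = (y_{jℓ})_{ℓ : j∈T_ℓ}, and the coupling map A sends y to (∑_{i∈T_ℓ} y_{iℓ})_{ℓ∈𝓛} ∈ ℝ^{|𝓛|}. Define the graph G on V by joining distinct nodes i and j whenever i,j ∈ T_ℓ for some ℓ∈𝓛. Then S_1 + S_2 + ⋯ + S_n = Null(A). -/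
/-!
Split a vector `u ∈ Null(A)` link by link: its part on link `ℓ` keeps the entries `u_{jℓ}` and
zeroes all others. These parts sum to `u`; each lies in `Null(A)`, because the only coordinate of
`A` it can affect is the one of `ℓ`, which equals `(A u)_ℓ = 0`; and each is supported on `T_ℓ`,
a clique of `G`, hence inside the closed neighborhood of any transmitter of `ℓ`.
-/

namespace LinkBlocks

variable {V L M : Type*} [DecidableEq L] [AddCommMonoid M] (T : L → Finset V)

def linkSum (y : (j : V) → {ℓ : L // j ∈ T ℓ} → M) (ℓ : L) : M :=
  ∑ i ∈ (T ℓ).attach, y i.1 ⟨ℓ, i.2⟩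

def linkPart (ℓ : L) (u : (j : V) → {ℓ : L // j ∈ T ℓ} → M) :
    (j : V) → {ℓ : L // j ∈ T ℓ} → M :=
  fun j ℓ' => if ℓ'.1 = ℓ then u j ℓ' else 0

variable {T}

theorem sum_linkPart [Fintype L] (u : (j : V) → {ℓ : L // j ∈ T ℓ} → M) :
    ∑ ℓ, linkPart T ℓ u = u := by
  ext j ℓ'
  simp [linkPart, Finset.sum_apply]

theorem linkPart_eq_zero_of_notMem {ℓ : L} {j : V} (u : (j : V) → {ℓ : L // j ∈ T ℓ} → M)
    (hj : j ∉ T ℓ) : linkPart T ℓ u j = 0 := by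
  ext ℓ'
  have hne : ℓ'.1 ≠ ℓ := fun h => hj (h ▸ ℓ'.2)
  simp [linkPart, hne]

theorem linkSum_linkPart {ℓ : L} {u : (j : V) → {ℓ : L // j ∈ T ℓ} → M}
    (hu : linkSum T u ℓ = 0) : linkSum T (linkPart T ℓ u) = 0 := by
  ext ℓ'
  by_cases h : ℓ' = ℓ
  · subst h
    simpa [linkSum, linkPart] using hu
  · simp [linkSum, linkPart, h]

end LinkBlocks

open LinkBlocks

/-- Lemma `reachable`, second part: rate control.
`𝓛` is a finite set of links, `T ℓ ⊆ {1,…,n}` the nonempty set of transmitters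
using link `ℓ`.  Node `j` holds the block `y j = (y_{jℓ})_{ℓ : j ∈ T ℓ}` and the
coupling map sends `y` to `(∑ i ∈ T ℓ, y i ℓ)_{ℓ}`.  The graph `G` joins two
distinct nodes whenever they share a link.  With `S i` the subspace of vectors
vanishing outside the closed neighborhood of `i` and lying in `Null(A)`,
one has `S 1 + ⋯ + S n = Null(A)`. -/
theorem stmt_1 (n : ℕ) (L : Type*) [Fintype L] [DecidableEq L]
    (T : L → Finset (Fin n)) (hT : ∀ ℓ, (T ℓ).Nonempty)
    (G : SimpleGraph (Fin n))
    (hG : ∀ i j, G.Adj i j ↔ (i ≠ j ∧ ∃ ℓ, i ∈ T ℓ ∧ j ∈ T ℓ))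
    (Amap : ((j : Fin n) → ({ℓ : L // j ∈ T ℓ} → ℝ)) →ₗ[ℝ] (L → ℝ))
    (hAmap : ∀ y ℓ, Amap y ℓ = ∑ i ∈ (T ℓ).attach, y i.1 ⟨ℓ, i.2⟩)
    (S : Fin n → Submodule ℝ ((j : Fin n) → ({ℓ : L // j ∈ T ℓ} → ℝ)))
    (hS : ∀ i, (S i : Set ((j : Fin n) → ({ℓ : L // j ∈ T ℓ} → ℝ))) =
      {u | (∀ j, j ≠ i → ¬ G.Adj i j → u j = 0) ∧ Amap u = 0}) :
    (⨆ i, S i) = LinearMap.ker Amap := by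
  have hA : ⇑Amap = linkSum T := funext fun y => funext (hAmap y)
  have mem_S : ∀ i v, v ∈ S i ↔ (∀ j, j ≠ i → ¬ G.Adj i j → v j = 0) ∧ Amap v = 0 :=
    fun i v => by rw [← SetLike.mem_coe, hS]; rfl
  refine le_antisymm (iSup_le fun i v hv => ((mem_S i v).1 hv).2) fun u hu => ?_
  rw [← sum_linkPart u]
  refine Submodule.sum_mem _ fun ℓ _ => ?_
  obtain ⟨i, hi⟩ := hT ℓ
  refine Submodule.mem_iSup_of_mem i ((mem_S i _).2 ⟨fun j hji hij => ?_, ?_⟩)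
  · exact linkPart_eq_zero_of_notMem u fun hj => hij ((hG i j).2 ⟨hji.symm, ℓ, hi, hj⟩)
  · have hu : linkSum T u = 0 := hA ▸ hu
    rw [hA]
    exact linkSum_linkPart (congrFun hu ℓ)
end

section
/- Let G=(V,E) be a connected undirected graph on V={1,…,n} with n ≥ 2, let m ≥ 1, and let A = 𝓛_G ⊗ I_m, where 𝓛_G is the graph Laplacian of G, so that each node i's block matrix A_i is the i-th block column of 𝓛_G ⊗ I_m (each d_i = m). Then S_1 + ⋯ + S_n = Null(A) holds if and only if G contains a star centered at some node, i.e., there exists i ∈ V with N̄_i = V. Moreover, S_i = {0} whenever N̄_i ≠ V, and S_i = Null(A) whenever N̄_i = V. -/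
/-!
The Laplacian of a connected graph has exactly the constant vectors as kernel, and this
persists blockwise for `𝓛_G ⊗ I_m`. So `S i` consists of the constant vectors vanishing
outside `N̄ i`: if some node lies outside `N̄ i` the constant is `0`, and otherwise `S i` is
the whole kernel. The sum of the `S i` is therefore the kernel if some `N̄ i = V`, and `{0}`
otherwise, which differs from the (nonzero) kernel.
-/

open Matrix

namespace SimpleGraph

variable {V : Type*} (G : SimpleGraph V)

theorem sum_lapMatrix_smul_eq_zero_iff [Fintype V] [DecidableEq V] [DecidableRel G.Adj]
    {ι : Type*} (hG : G.Connected) (u : V → ι → ℝ) :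
    (∀ j, ∑ i, G.lapMatrix ℝ j i • u i = 0) ↔ ∀ i j, u i = u j := by
  have hcoord : ∀ j k, (∑ i, G.lapMatrix ℝ j i • u i) k = (G.lapMatrix ℝ *ᵥ fun i ↦ u i k) j :=
    fun j k ↦ by simp [mulVec, dotProduct]
  calc (∀ j, ∑ i, G.lapMatrix ℝ j i • u i = 0)
      ↔ ∀ k, G.lapMatrix ℝ *ᵥ (fun i ↦ u i k) = 0 := by
        simp only [funext_iff, hcoord, Pi.zero_apply]
        exact forall_comm
    _ ↔ ∀ k i j, u i k = u j k := by
        simp only [lapMatrix_mulVec_eq_zero_iff_forall_reachable, hG.preconnected _ _,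
          true_implies]
    _ ↔ ∀ i j, u i = u j := by
        simp only [funext_iff]
        exact ⟨fun h i j k ↦ h k i j, fun h k i j ↦ h i j k⟩

variable {R M N : Type*} [Semiring R] [AddCommMonoid M] [Module R M] [AddCommMonoid N]
  [Module R N]

/-- The subspace `S i` of the paper. -/
def localSubspace (A : (V → M) →ₗ[R] N) (i : V) : Submodule R (V → M) where
  carrier := {u | (∀ j, j ≠ i → ¬ G.Adj i j → u j = 0) ∧ A u = 0}
  add_mem' hu hv := ⟨fun j hj hij ↦ by simp [hu.1 j hj hij, hv.1 j hj hij], by simp [hu.2, hv.2]⟩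
  zero_mem' := ⟨fun _ _ _ ↦ rfl, map_zero A⟩
  smul_mem' c _ hu := ⟨fun j hj hij ↦ by simp [hu.1 j hj hij], by simp [hu.2]⟩

variable {G} {A : (V → M) →ₗ[R] N}

theorem localSubspace_le_ker (i : V) : G.localSubspace A i ≤ LinearMap.ker A :=
  fun _ hu ↦ hu.2

theorem localSubspace_eq_ker {i : V} (hi : ∀ j, j = i ∨ G.Adj i j) :
    G.localSubspace A i = LinearMap.ker A := by
  refine le_antisymm (localSubspace_le_ker i) fun u hu ↦ ⟨fun j hj hij ↦ ?_, hu⟩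
  exact (hij ((hi j).resolve_left hj)).elim

theorem localSubspace_eq_bot (hA : ∀ u, A u = 0 → ∀ i j, u i = u j) {i : V}
    (hi : ¬ ∀ j, j = i ∨ G.Adj i j) : G.localSubspace A i = ⊥ := by
  simp only [not_forall, not_or] at hi
  obtain ⟨j, hj, hij⟩ := hi
  refine eq_bot_iff.2 fun u ⟨hsupp, hu⟩ ↦ (Submodule.mem_bot R).2 ?_
  funext k
  rw [hA u hu k j, hsupp j hj hij, Pi.zero_apply]

theorem iSup_localSubspace_eq_ker_iff (hA : ∀ u, A u = 0 → ∀ i j, u i = u j)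
    (hker : LinearMap.ker A ≠ ⊥) :
    ⨆ i, G.localSubspace A i = LinearMap.ker A ↔ ∃ i, ∀ j, j = i ∨ G.Adj i j := by
  constructor
  · intro hsup
    by_contra hstar
    exact hker (hsup ▸ iSup_eq_bot.2 fun i ↦ localSubspace_eq_bot hA fun hi ↦ hstar ⟨i, hi⟩)
  · rintro ⟨i, hi⟩
    refine le_antisymm (iSup_le localSubspace_le_ker) ?_
    exact (localSubspace_eq_ker hi).symm.le.trans (le_iSup _ i)

end SimpleGraph

theorem stmt_2_general (n m : ℕ) (hm : 1 ≤ m)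
    (G : SimpleGraph (Fin n)) [DecidableRel G.Adj] (hconn : G.Connected)
    (Amap : (Fin n → Fin m → ℝ) →ₗ[ℝ] (Fin n → Fin m → ℝ))
    (hAmap : ∀ u j, Amap u j = ∑ i, G.lapMatrix ℝ j i • u i)
    (S : Fin n → Submodule ℝ (Fin n → Fin m → ℝ))
    (hS : ∀ i, (S i : Set (Fin n → Fin m → ℝ)) =
      {u | (∀ j, j ≠ i → ¬ G.Adj i j → u j = 0) ∧ Amap u = 0}) :
    ((⨆ i, S i) = LinearMap.ker Amap ↔ ∃ i, ∀ j, j = i ∨ G.Adj i j) ∧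
    (∀ i, ¬ (∀ j, j = i ∨ G.Adj i j) → S i = ⊥) ∧
    (∀ i, (∀ j, j = i ∨ G.Adj i j) → S i = LinearMap.ker Amap) := by
  obtain rfl : S = G.localSubspace Amap := funext fun i ↦ SetLike.coe_injective (hS i)
  have hker : ∀ u, Amap u = 0 ↔ ∀ i j, u i = u j := fun u ↦ by
    rw [← G.sum_lapMatrix_smul_eq_zero_iff hconn u, funext_iff]
    simp only [hAmap, Pi.zero_apply]
  have hker_ne_bot : LinearMap.ker Amap ≠ ⊥ := by
    have : Nonempty (Fin n) := hconn.nonempty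
    refine (Submodule.ne_bot_iff _).2 ⟨fun _ _ ↦ 1, (hker _).2 fun _ _ ↦ rfl, fun h ↦ ?_⟩
    exact one_ne_zero (congrFun (congrFun h (Classical.arbitrary _)) ⟨0, hm⟩)
  have hA u := (hker u).1
  exact ⟨SimpleGraph.iSup_localSubspace_eq_ker_iff hA hker_ne_bot,
    fun _ ↦ SimpleGraph.localSubspace_eq_bot hA, fun _ ↦ SimpleGraph.localSubspace_eq_ker⟩

/-- consensus constraint example.
For a connected graph `G` on `{1,…,n}` (`n ≥ 2`, `m ≥ 1`) and the coupling map
`A = 𝓛_G ⊗ I_m` (node `i`'s block being the `i`-th block column of the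
Laplacian tensored with `I_m`), the reachability identity
`S 1 + ⋯ + S n = Null(A)` holds iff `G` contains a star centered at some node
(`N̄ i = V` for some `i`).  Moreover `S i = {0}` when `N̄ i ≠ V` and
`S i = Null(A)` when `N̄ i = V`. -/
theorem stmt_2 (n m : ℕ) (hn : 2 ≤ n) (hm : 1 ≤ m)
    (G : SimpleGraph (Fin n)) [DecidableRel G.Adj] (hconn : G.Connected)
    (Amap : (Fin n → Fin m → ℝ) →ₗ[ℝ] (Fin n → Fin m → ℝ))
    (hAmap : ∀ u j, Amap u j = ∑ i, G.lapMatrix ℝ j i • u i)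
    (S : Fin n → Submodule ℝ (Fin n → Fin m → ℝ))
    (hS : ∀ i, (S i : Set (Fin n → Fin m → ℝ)) =
      {u | (∀ j, j ≠ i → ¬ G.Adj i j → u j = 0) ∧ Amap u = 0}) :
    ((⨆ i, S i) = LinearMap.ker Amap ↔ ∃ i, ∀ j, j = i ∨ G.Adj i j) ∧
    (∀ i, ¬ (∀ j, j = i ∨ G.Adj i j) → S i = ⊥) ∧
    (∀ i, (∀ j, j = i ∨ G.Adj i j) → S i = LinearMap.ker Amap) :=
  stmt_2_general n m hm G hconn Amap hAmap S hS
end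

section
/- Consider f_i(x) = (1/2)(x − θ_i)² on ℝ for i=1,…,4 with (θ_1,θ_2,θ_3,θ_4) = (1,0,0,1), coupling coefficients A_1 = A_4 = 1, A_2 = A_3 = 0, coupling constraint x_1 + x_4 = 1, and the line graph with edges {1,2},{2,3},{3,4}. Then: (i) at the point x' = (0,0,0,1), for every edge {i,j} of the line graph, the unique minimizer of (p_{ji}, p_{ij}) ↦ f_i(x_i' + p_{ji}) + f_j(x_j' + p_{ij}) subject to A_i p_{ji} + A_j p_{ij} = 0 is (p_{ji}, p_{ij}) = (0,0), so x' is a fixed point of the edge-based weighted-gradient update; (ii) the unique minimizer of ∑_{i=1}^4 f_i(x_i) over { x ∈ ℝ⁴ : x_1 + x_4 = 1 } is (1/2, 0, 0, 1/2) ≠ x'. -/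
/-!
Both parts are instances of one fact: on a hyperplane with normal `c`, the separable quadratic
`∑ ½ (x i - θ i)²` is strictly minimized at any point whose gradient `x - θ` is a multiple of `c`,
since the linear term of the expansion around that point vanishes along the hyperplane.
At `x' = (0,0,0,1)` the gradient is `(-1,0,0,0)`; its restriction to each edge `{i,j}` is a
multiple of `(a i, a j)`, so no edge update moves, yet it is not a multiple of `a = (1,0,0,1)`,
whereas the gradient `-½ a` at `(½,0,0,½)` is.
-/

open Finset

theorem sum_half_sq_sub_lt_of_sub_eq_smul {ι : Type*} [Fintype ι] {θ c xs x : ι → ℝ} {μ : ℝ}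
    (hxs : ∀ i, xs i - θ i = μ * c i) (hx : ∑ i, c i * x i = ∑ i, c i * xs i) (hne : x ≠ xs) :
    ∑ i, 1 / 2 * (xs i - θ i) ^ 2 < ∑ i, 1 / 2 * (x i - θ i) ^ 2 := by
  have expand : ∑ i, 1 / 2 * (x i - θ i) ^ 2 = ∑ i, 1 / 2 * (xs i - θ i) ^ 2 +
      μ * (∑ i, c i * x i - ∑ i, c i * xs i) + ∑ i, 1 / 2 * (x i - xs i) ^ 2 := by
    rw [mul_sub, mul_sum, mul_sum, ← sum_sub_distrib, ← sum_add_distrib, ← sum_add_distrib]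
    exact sum_congr rfl fun i _ => by linear_combination (x i - xs i) * hxs i
  rw [expand, hx, sub_self, mul_zero, add_zero]
  obtain ⟨i, hi⟩ := Function.ne_iff.mp hne
  refine lt_add_of_pos_right _ (sum_pos' (fun j _ => by positivity) ⟨i, mem_univ i, ?_⟩)
  have : x i - xs i ≠ 0 := sub_ne_zero.mpr hi
  positivity

theorem half_sq_add_half_sq_lt_of_sub_eq_smul {θi θj xi xj ai aj μ p q : ℝ}
    (hi : xi - θi = μ * ai) (hj : xj - θj = μ * aj) (hc : ai * p + aj * q = 0)
    (hpq : (p, q) ≠ (0, 0)) :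
    1 / 2 * (xi - θi) ^ 2 + 1 / 2 * (xj - θj) ^ 2 <
      1 / 2 * (xi + p - θi) ^ 2 + 1 / 2 * (xj + q - θj) ^ 2 := by
  have hne : ![xi + p, xj + q] ≠ ![xi, xj] := by
    contrapose! hpq
    simpa using hpq
  simpa using sum_half_sq_sub_lt_of_sub_eq_smul (θ := ![θi, θj]) (c := ![ai, aj])
    (μ := μ) (fun k => by fin_cases k <;> simpa) (by
      simp only [Fin.sum_univ_two, Matrix.cons_val_zero, Matrix.cons_val_one, Matrix.cons_val_fin_one]
      linear_combination hc) hne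

/-- Example 1: failure of the extension to general `Aᵢ`'s.
With `f i t = ½(t − θ i)²`, `θ = (1,0,0,1)`, coupling coefficients
`a = (1,0,0,1)`, coupling constraint `x 0 + x 3 = 1` and the line graph
`0–1–2–3`:
(i) at `x' = (0,0,0,1)`, for every edge `{i,j}` the unique minimizer of
`(p,q) ↦ f i (x' i + p) + f j (x' j + q)` subject to `a i * p + a j * q = 0`
is `(0,0)` (so `x'` is a fixed point of the edge-based update);
(ii) the unique minimizer of `∑ i, f i (x i)` over `{x : x 0 + x 3 = 1}` is
`(1/2, 0, 0, 1/2) ≠ x'`. -/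
theorem stmt_4 (θ : Fin 4 → ℝ) (hθ : θ = ![1, 0, 0, 1])
    (f : Fin 4 → ℝ → ℝ) (hf : ∀ i t, f i t = (1/2) * (t - θ i)^2)
    (a : Fin 4 → ℝ) (ha : a = ![1, 0, 0, 1])
    (x' : Fin 4 → ℝ) (hx' : x' = ![0, 0, 0, 1])
    (xs : Fin 4 → ℝ) (hxs : xs = ![1/2, 0, 0, 1/2]) :
    (∀ i j : Fin 4, ((i, j) = (0, 1) ∨ (i, j) = (1, 2) ∨ (i, j) = (2, 3)) →
      (a i * (0:ℝ) + a j * (0:ℝ) = 0) ∧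
      ∀ p q : ℝ, a i * p + a j * q = 0 → (p, q) ≠ (0, 0) →
        f i (x' i + 0) + f j (x' j + 0) < f i (x' i + p) + f j (x' j + q)) ∧
    (xs 0 + xs 3 = 1) ∧
    (∀ x : Fin 4 → ℝ, x 0 + x 3 = 1 → x ≠ xs →
      ∑ i, f i (xs i) < ∑ i, f i (x i)) ∧
    xs ≠ x' := by
  subst hθ ha hx' hxs
  simp only [hf, add_zero]
  refine ⟨?edges, by norm_num [Matrix.cons_val_three], ?global, fun h => by simpa using congrFun h 0⟩
  case edges =>
    rintro i j h
    rcases h with h | h | h <;> simp only [Prod.mk.injEq] at h <;> obtain ⟨rfl, rfl⟩ := h <;>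
      refine ⟨by simp, fun p q hc hpq => ?_⟩
    · exact half_sq_add_half_sq_lt_of_sub_eq_smul (μ := -1) (by simp) (by simp) hc hpq
    · exact half_sq_add_half_sq_lt_of_sub_eq_smul (μ := 0) (by simp) (by simp) hc hpq
    · exact half_sq_add_half_sq_lt_of_sub_eq_smul (μ := 0) (by simp) (by simp) hc hpq
  case global =>
    intro x hx hne
    refine sum_half_sq_sub_lt_of_sub_eq_smul (μ := -1 / 2) (c := ![1, 0, 0, 1])
      (fun i => by fin_cases i <;> norm_num) ?_ hne
    norm_num [Fin.sum_univ_four, Matrix.cons_val_two, Matrix.cons_val_three, hx]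
end

section
/- Consider f_i(x) = (1/2)(x − θ_i)² on ℝ for i=1,…,4 with (θ_1,θ_2,θ_3,θ_4) = (1,0,0,1), coupling coefficients A_i = 1 for all i, coupling constraint x_1 + x_2 + x_3 + x_4 = 1, local constraints x_i ∈ [0,1], and the line graph with edges {1,2},{2,3},{3,4}. Then: (i) at the point x' = (0,0,0,1), for every edge {i,j} of the line graph, the unique minimizer of (p_{ji}, p_{ij}) ↦ f_i(x_i' + p_{ji}) + f_j(x_j' + p_{ij}) subject to p_{ji} + p_{ij} = 0, x_i' + p_{ji} ∈ [0,1], and x_j' + p_{ij} ∈ [0,1] is (p_{ji}, p_{ij}) = (0,0), so x' is a fixed point of the locally-constrained edge-based update; (ii) the unique minimizer of ∑_{i=1}^4 f_i(x_i) over { x ∈ [0,1]⁴ : x_1 + x_2 + x_3 + x_4 = 1 } is (1/2, 0, 0, 1/2) ≠ x'. -/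
/-!
Every `fᵢ` is `½(t − θᵢ)²`, so `½(y − θ)² = ½(x − θ)² + (y − x)(x − θ) + ½(y − x)²` exactly.
Hence a feasible point strictly minimizes a sum of such terms as soon as the first-order
term `∑ (yᵢ − xᵢ)(xᵢ − θᵢ)` is nonnegative in every feasible direction. On each edge of the
line graph this holds at `x' = (0,0,0,1)`: the gradient `x' − θ = (−1,0,0,0)` is seen only by
the edge `{1,2}`, where `x₂' + q ≥ 0` makes the first-order term `−p = q` nonnegative. Globally it holds at
`(½,0,0,½)`, where the first-order term equals `½(x₂ + x₃) ≥ 0`.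
-/

open Finset

attribute [local simp] Matrix.cons_val_two Matrix.cons_val_three

theorem half_sq_sub_eq (a x y : ℝ) :
    1 / 2 * (y - a) ^ 2 = 1 / 2 * (x - a) ^ 2 + (y - x) * (x - a) + 1 / 2 * (y - x) ^ 2 := by
  ring

theorem sum_half_sq_sub_lt_of_first_order {ι : Type*} [Fintype ι] (θ x y : ι → ℝ)
    (hfirst : 0 ≤ ∑ i, (y i - x i) * (x i - θ i)) (hne : y ≠ x) :
    ∑ i, 1 / 2 * (x i - θ i) ^ 2 < ∑ i, 1 / 2 * (y i - θ i) ^ 2 := by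
  obtain ⟨k, hk⟩ := Function.ne_iff.mp hne
  have hsq : 0 < ∑ i, (y i - x i) ^ 2 :=
    sum_pos' (fun i _ => sq_nonneg _) ⟨k, mem_univ k, sq_pos_of_ne_zero (sub_ne_zero.mpr hk)⟩
  simp only [fun i => half_sq_sub_eq (θ i) (x i) (y i)]
  rw [sum_add_distrib, sum_add_distrib, ← mul_sum, ← mul_sum]
  linarith

theorem half_sq_sub_add_lt_of_first_order (a b u v p q : ℝ)
    (hfirst : 0 ≤ p * (u - a) + q * (v - b)) (hne : (p, q) ≠ (0, 0)) :
    1 / 2 * (u - a) ^ 2 + 1 / 2 * (v - b) ^ 2 < 1 / 2 * (u + p - a) ^ 2 + 1 / 2 * (v + q - b) ^ 2 := by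
  have hne' : ![u + p, v + q] ≠ ![u, v] := by
    intro h
    exact hne (Prod.ext (by simpa using congrFun h 0) (by simpa using congrFun h 1))
  simpa [Fin.sum_univ_two] using
    sum_half_sq_sub_lt_of_first_order ![a, b] ![u, v] ![u + p, v + q] (by simpa using hfirst) hne'

/-- Example 2: failure with local constraints.
With `f i t = ½(t − θ i)²`, `θ = (1,0,0,1)`, coupling coefficients all `1`,
coupling constraint `∑ i, x i = 1`, local constraints `x i ∈ [0,1]`, and the
line graph `0–1–2–3`:
(i) at `x' = (0,0,0,1)`, for every edge `{i,j}` the unique minimizer of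
`(p,q) ↦ f i (x' i + p) + f j (x' j + q)` subject to `p + q = 0`,
`x' i + p ∈ [0,1]`, `x' j + q ∈ [0,1]` is `(0,0)`;
(ii) the unique minimizer of `∑ i, f i (x i)` over
`{x ∈ [0,1]⁴ : ∑ i, x i = 1}` is `(1/2, 0, 0, 1/2) ≠ x'`. -/
theorem stmt_5 (θ : Fin 4 → ℝ) (hθ : θ = ![1, 0, 0, 1])
    (f : Fin 4 → ℝ → ℝ) (hf : ∀ i t, f i t = (1/2) * (t - θ i)^2)
    (x' : Fin 4 → ℝ) (hx' : x' = ![0, 0, 0, 1])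
    (xs : Fin 4 → ℝ) (hxs : xs = ![1/2, 0, 0, 1/2]) :
    (∀ i j : Fin 4, ((i, j) = (0, 1) ∨ (i, j) = (1, 2) ∨ (i, j) = (2, 3)) →
      ((0:ℝ) + (0:ℝ) = 0 ∧ x' i + 0 ∈ Set.Icc (0:ℝ) 1 ∧ x' j + 0 ∈ Set.Icc (0:ℝ) 1) ∧
      ∀ p q : ℝ, p + q = 0 → x' i + p ∈ Set.Icc (0:ℝ) 1 → x' j + q ∈ Set.Icc (0:ℝ) 1 →
        (p, q) ≠ (0, 0) →
        f i (x' i + 0) + f j (x' j + 0) < f i (x' i + p) + f j (x' j + q)) ∧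
    ((∑ i, xs i) = 1 ∧ ∀ i, xs i ∈ Set.Icc (0:ℝ) 1) ∧
    (∀ x : Fin 4 → ℝ, (∑ i, x i) = 1 → (∀ i, x i ∈ Set.Icc (0:ℝ) 1) → x ≠ xs →
      ∑ i, f i (xs i) < ∑ i, f i (x i)) ∧
    xs ≠ x' := by
  simp only [hf]
  refine ⟨?edges, ⟨?_, ?_⟩, fun x hsum hbox hne => ?global, ?_⟩
  case edges =>
    rintro i j hij
    refine ⟨⟨add_zero 0, ?_⟩, fun p q _ _ hq hne => ?_⟩
    · rcases hij with h | h | h <;> obtain ⟨rfl, rfl⟩ := Prod.ext_iff.mp h <;> norm_num [hx']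
    rw [add_zero, add_zero]
    refine half_sq_sub_add_lt_of_first_order (θ i) (θ j) (x' i) (x' j) p q ?_ hne
    rcases hij with h | h | h <;> obtain ⟨rfl, rfl⟩ := Prod.ext_iff.mp h
    · norm_num [hθ, hx'] at hq ⊢
      linarith [hq.1]
    all_goals norm_num [hθ, hx']
  case global =>
    refine sum_half_sq_sub_lt_of_first_order θ xs x ?_ hne
    simp only [Fin.sum_univ_four] at hsum ⊢
    norm_num [hθ, hxs]
    linarith [(hbox 1).1, (hbox 2).1]
  · norm_num [hxs, Fin.sum_univ_four]
  · intro i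
    fin_cases i <;> norm_num [hxs]
  · simp [hxs, hx', funext_iff, Fin.forall_fin_succ]
end

section
/- Under the DFM setup, every iterate x^k (k ≥ 0) generated by DFM is feasible for the barrier problem (P_ρ), i.e., ∑_i A_i x_i^k = c and x_i^k ∈ X̃_i for all i, and hence x^k is also feasible for the original problem (P). -/
/-!
Both halves of feasibility are preserved by one DFM step. The coupling constraint: by symmetry of
closed neighbourhoods, the update adds `∑ⱼ ηⱼ ∑_{i ∈ N̄ⱼ} Aᵢ pⱼᵢ = 0` to `∑ᵢ Aᵢ xᵢ`. The strict
constraints: `ηⱼ ≤ 1/|N̄ᵢ|` for `j ∈ N̄ᵢ`, so `∑_{j ∈ N̄ᵢ} ηⱼ ≤ 1` and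
`xᵢ + ∑ⱼ ηⱼ pⱼᵢ` is a convex combination of `xᵢ` and the points `xᵢ + pⱼᵢ`, all in the convex
set `X̃ᵢ`.
-/

open RealInnerProductSpace Finset

theorem Convex.add_sum_smul_mem {E ι : Type*} [AddCommGroup E] [Module ℝ E] {s : Set E}
    (hs : Convex ℝ s) {t : Finset ι} {w : ι → ℝ} {v : ι → E} {a : E} (ha : a ∈ s)
    (hw₀ : ∀ j ∈ t, 0 ≤ w j) (hw₁ : ∑ j ∈ t, w j ≤ 1) (hv : ∀ j ∈ t, a + v j ∈ s) :
    a + ∑ j ∈ t, w j • v j ∈ s := by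
  have key := hs.sum_mem (t := insertNone t) (w := fun j => Option.elim j (1 - ∑ j ∈ t, w j) w)
    (z := fun j => Option.elim j a (a + v ·)) (forall_mem_insertNone.2 ⟨sub_nonneg.2 hw₁, hw₀⟩)
    (by simp) (forall_mem_insertNone.2 ⟨ha, hv⟩)
  convert key using 1
  simp only [sum_insertNone, Option.elim_none, Option.elim_some, smul_add, sum_add_distrib,
    ← sum_smul, sub_smul, one_smul]
  abel

theorem Finset.sum_inv_sup_card_le_one {ι : Type*} {N : ι → Finset ι}
    (hN : ∀ i j, j ∈ N i → i ∈ N j) (i : ι) :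
    ∑ j ∈ N i, (((N j).sup fun l => #(N l) : ℕ) : ℝ)⁻¹ ≤ 1 :=
  calc ∑ j ∈ N i, (((N j).sup fun l => #(N l) : ℕ) : ℝ)⁻¹
      ≤ ∑ _j ∈ N i, (#(N i) : ℝ)⁻¹ := by
        refine sum_le_sum fun j hj => inv_anti₀ ?_ ?_
        · exact_mod_cast card_pos.2 ⟨j, hj⟩
        · exact_mod_cast le_sup (f := fun l => #(N l)) (hN i j hj)
    _ = #(N i) * (#(N i) : ℝ)⁻¹ := by rw [sum_const, nsmul_eq_mul]
    _ ≤ 1 := mul_inv_le_one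

theorem SimpleGraph.mem_insert_neighborFinset_comm {V : Type*} [DecidableEq V]
    (G : SimpleGraph V) [∀ v, Fintype (G.neighborSet v)] {i j : V} :
    j ∈ insert i (G.neighborFinset i) ↔ i ∈ insert j (G.neighborFinset j) := by
  simp only [mem_insert, mem_neighborFinset, eq_comm, G.adj_comm]

theorem Finset.sum_map_add_sum_smul_of_symm {R ι M : Type*} [Semiring R] [Fintype ι]
    {E : ι → Type*} [∀ i, AddCommMonoid (E i)] [∀ i, Module R (E i)] [AddCommMonoid M]
    [Module R M] (T : ∀ i, E i →ₗ[R] M) {N : ι → Finset ι} (hN : ∀ i j, j ∈ N i ↔ i ∈ N j)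
    (η : ι → R) (x : ∀ i, E i) (p : ι → ∀ i, E i) (hp : ∀ j, ∑ i ∈ N j, T i (p j i) = 0) :
    ∑ i, T i (x i + ∑ j ∈ N i, η j • p j i) = ∑ i, T i (x i) := by
  have swap : ∑ i, ∑ j ∈ N i, η j • T i (p j i) = ∑ j, ∑ i ∈ N j, η j • T i (p j i) :=
    sum_comm' fun i j => by simp [hN i j]
  simp only [map_add, map_sum, map_smul, sum_add_distrib, swap, ← smul_sum, hp, smul_zero,
    sum_const_zero, add_zero]

theorem stmt_6_general
    (n m : ℕ) (d : Fin n → ℕ)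
    (G : SimpleGraph (Fin n)) [DecidableRel G.Adj]
    -- local constraint functions, convex, β-smooth, β₁-Lipschitz on X i
    (q : Fin n → ℕ)
    (g : (i : Fin n) → Fin (q i) → EuclideanSpace ℝ (Fin (d i)) → ℝ)
    (hgconv : ∀ i j, ConvexOn ℝ Set.univ (g i j))
    -- coupling data and Slater point
    (A : (i : Fin n) → Matrix (Fin m) (Fin (d i)) ℝ) (c : Fin m → ℝ)
    -- closed neighborhoods and step weights η
    (Nbar : Fin n → Finset (Fin n))
    (hNbar : ∀ i, Nbar i = insert i (G.neighborFinset i))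
    (η : Fin n → ℝ)
    (hη : ∀ i, η i = (((Nbar i).sup (fun l => (Nbar l).card) : ℕ) : ℝ)⁻¹)
    -- DFM iterates, local search directions and quadratic surrogates
    (x : ℕ → (i : Fin n) → EuclideanSpace ℝ (Fin (d i)))
    (p : ℕ → Fin n → (j : Fin n) → EuclideanSpace ℝ (Fin (d j)))
    -- x⁰ is feasible for the barrier problem (P_ρ)
    (hx0 : (∑ i, (A i).mulVec (x 0 i)) = c ∧ ∀ i j, g i j (x 0 i) < 0)
    -- (p k i ·) is a minimizer of the local subproblem of node i at iteration k
    (hpfeas : ∀ k i, (∑ j ∈ Nbar i, (A j).mulVec (p k i j)) = 0 ∧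
      ∀ j ∈ Nbar i, ∀ l, g j l (x k j + p k i j) < 0)
    -- DFM update
    (hupd : ∀ k i, x (k+1) i = x k i + ∑ j ∈ Nbar i, η j • p k j i)
    :
    ∀ k, ((∑ i, (A i).mulVec (x k i)) = c ∧ (∀ i j, g i j (x k i) < 0)) ∧
      ((∑ i, (A i).mulVec (x k i)) = c ∧ (∀ i j, g i j (x k i) ≤ 0)) := by
  have hsym : ∀ i j, j ∈ Nbar i ↔ i ∈ Nbar j := fun i j => by
    simpa only [hNbar] using G.mem_insert_neighborFinset_comm
  have hη₀ : ∀ j, 0 ≤ η j := fun j => by rw [hη]; positivity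
  have hη₁ : ∀ i, ∑ j ∈ Nbar i, η j ≤ 1 := fun i => by
    simpa only [hη] using sum_inv_sup_card_le_one (fun i j => (hsym i j).1) i
  let T i := (A i).mulVecLin ∘ₗ (WithLp.linearEquiv 2 ℝ (Fin (d i) → ℝ)).toLinearMap
  have feasible : ∀ k, (∑ i, (A i).mulVec (x k i)) = c ∧ ∀ i l, g i l (x k i) < 0 := by
    intro k
    induction k with
    | zero => exact hx0
    | succ k ih =>
      refine ⟨?_, fun i l => ?_⟩
      · simp only [hupd]
        exact (sum_map_add_sum_smul_of_symm T hsym η (x k) (p k) fun j => (hpfeas k j).1).trans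
          ih.1
      · rw [hupd]
        exact (((hgconv i l).convex_lt 0).add_sum_smul_mem ⟨trivial, ih.2 i l⟩
          (fun j _ => hη₀ j) (hη₁ i)
          fun j hj => ⟨trivial, (hpfeas k j).2 i ((hsym i j).1 hj) l⟩).2
  exact fun k => ⟨feasible k, (feasible k).1, fun i l => ((feasible k).2 i l).le⟩

/-- Theorem 1, feasibility part: every DFM iterate `x k` is
feasible for the barrier problem (P_ρ) — i.e. `∑ i, A i *ᵥ x k i = c` and
`x k i ∈ X̃ i` — and hence also feasible for the original problem (P). -/
theorem stmt_6
    (n m : ℕ) (hn : 0 < n) (d : Fin n → ℕ)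
    (G : SimpleGraph (Fin n)) [DecidableRel G.Adj]
    -- local cost functions, `L i`-smooth
    (f : (i : Fin n) → EuclideanSpace ℝ (Fin (d i)) → ℝ)
    (Lf : Fin n → ℝ)
    (hfdiff : ∀ i, Differentiable ℝ (f i))
    (hfsmooth : ∀ i, ∀ z w : EuclideanSpace ℝ (Fin (d i)),
      ‖gradient (f i) z - gradient (f i) w‖ ≤ Lf i * ‖z - w‖)
    -- local constraint functions, convex, β-smooth, β₁-Lipschitz on X i
    (q : Fin n → ℕ)
    (g : (i : Fin n) → Fin (q i) → EuclideanSpace ℝ (Fin (d i)) → ℝ)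
    (β β₁ : ℝ)
    (hgconv : ∀ i j, ConvexOn ℝ Set.univ (g i j))
    (hgdiff : ∀ i j, Differentiable ℝ (g i j))
    (hgsmooth : ∀ i j, ∀ z w : EuclideanSpace ℝ (Fin (d i)),
      ‖gradient (g i j) z - gradient (g i j) w‖ ≤ β * ‖z - w‖)
    (hglip : ∀ i j, ∀ z w : EuclideanSpace ℝ (Fin (d i)),
      (∀ l, g i l z ≤ 0) → (∀ l, g i l w ≤ 0) → |g i j z - g i j w| ≤ β₁ * ‖z - w‖)
    -- coupling data and Slater point
    (A : (i : Fin n) → Matrix (Fin m) (Fin (d i)) ℝ) (c : Fin m → ℝ)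
    (hslater : ∃ xt : (i : Fin n) → EuclideanSpace ℝ (Fin (d i)),
      (∑ i, (A i).mulVec (xt i)) = c ∧ ∀ i j, g i j (xt i) < 0)
    -- barrier parameter and barrier functions
    (ρ : ℝ) (hρ : 0 < ρ)
    (B : (i : Fin n) → EuclideanSpace ℝ (Fin (d i)) → ℝ)
    (hB : ∀ i z, B i z = ∑ j, -(g i j z)⁻¹)
    -- closed neighborhoods and step weights η
    (Nbar : Fin n → Finset (Fin n))
    (hNbar : ∀ i, Nbar i = insert i (G.neighborFinset i))
    (η : Fin n → ℝ)
    (hη : ∀ i, η i = (((Nbar i).sup (fun l => (Nbar l).card) : ℕ) : ℝ)⁻¹)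
    -- DFM iterates, local search directions and quadratic surrogates
    (x : ℕ → (i : Fin n) → EuclideanSpace ℝ (Fin (d i)))
    (p : ℕ → Fin n → (j : Fin n) → EuclideanSpace ℝ (Fin (d j)))
    (fsur : ℕ → (j : Fin n) → EuclideanSpace ℝ (Fin (d j)) → ℝ)
    (hfsur : ∀ k j z, fsur k j z =
      f j (x k j) + ⟪gradient (f j) (x k j), z - x k j⟫ + (Lf j / 2) * ‖z - x k j‖^2)
    -- x⁰ is feasible for the barrier problem (P_ρ)
    (hx0 : (∑ i, (A i).mulVec (x 0 i)) = c ∧ ∀ i j, g i j (x 0 i) < 0)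
    -- (p k i ·) is a minimizer of the local subproblem of node i at iteration k
    (hpfeas : ∀ k i, (∑ j ∈ Nbar i, (A j).mulVec (p k i j)) = 0 ∧
      ∀ j ∈ Nbar i, ∀ l, g j l (x k j + p k i j) < 0)
    (hpopt : ∀ k i, ∀ w : (j : Fin n) → EuclideanSpace ℝ (Fin (d j)),
      ((∑ j ∈ Nbar i, (A j).mulVec (w j)) = 0 ∧
        ∀ j ∈ Nbar i, ∀ l, g j l (x k j + w j) < 0) →
      (∑ j ∈ Nbar i, (fsur k j (x k j + p k i j) + ρ * B j (x k j + p k i j))) ≤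
      (∑ j ∈ Nbar i, (fsur k j (x k j + w j) + ρ * B j (x k j + w j))))
    -- DFM update
    (hupd : ∀ k i, x (k+1) i = x k i + ∑ j ∈ Nbar i, η j • p k j i)
    :
    ∀ k, ((∑ i, (A i).mulVec (x k i)) = c ∧ (∀ i j, g i j (x k i) < 0)) ∧
      ((∑ i, (A i).mulVec (x k i)) = c ∧ (∀ i j, g i j (x k i) ≤ 0)) :=
  stmt_6_general n m d G q g hgconv A c Nbar hNbar η hη x p hx0 hpfeas hupd
end

section
/- Suppose every f_i is convex. Let x̃* be an optimal solution of the barrier problem (P_ρ), let f̲ be any lower bound on the optimal value f* of (P), let x' be any feasible point of (P_ρ), and let ε > 0. If either (i) f(x') − f̲ ≤ ε/2 and 0 < ρ ≤ ε/(2B(x')), or (ii) f(x') − f̲ > ε/2 and 0 < ρ ≤ ε²/(4(f(x') − f̲)B(x')), then f(x̃*) − f* ≤ ε. -/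
/-!
Any convex combination `y = θ x' + (1 - θ) x*` of a strictly feasible `x'` and a feasible `x*`
is strictly feasible, and by convexity of the constraints `g(y) ≤ θ g(x')`, so the inverse
barrier grows by at most the factor `θ⁻¹`: `B(y) ≤ B(x') / θ`. Comparing the barrier minimiser
with `y` and dropping its nonnegative barrier term gives
`f(x̃*) - f* ≤ θ (f(x') - f̲) + ρ B(x') / θ` for every `θ ∈ (0, 1]`. Take `θ = 1` in case (i)
and `θ = ε / (2 (f(x') - f̲))` in case (ii); each term is then at most `ε / 2`.
-/

open Finset

section InvBarrier

variable {X κ : Type*} [Fintype κ]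

noncomputable def invBarrier (g : κ → X → ℝ) (x : X) : ℝ := ∑ j, -(g j x)⁻¹

lemma invBarrier_nonneg {g : κ → X → ℝ} {x : X} (hx : ∀ j, g j x ≤ 0) :
    0 ≤ invBarrier g x :=
  sum_nonneg fun j _ => neg_nonneg.mpr (inv_nonpos.mpr (hx j))

lemma neg_inv_le_inv_mul_neg_inv {a b θ : ℝ} (hθ : 0 < θ) (hb : b < 0) (hab : a ≤ θ * b) :
    -a⁻¹ ≤ θ⁻¹ * -b⁻¹ := by
  have hθb : θ * b < 0 := mul_neg_of_pos_of_neg hθ hb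
  have : (θ * b)⁻¹ ≤ a⁻¹ := (inv_le_inv_of_neg hθb (hab.trans_lt hθb)).mpr hab
  rw [mul_inv] at this
  linarith

lemma invBarrier_le_inv_mul {g : κ → X → ℝ} {x y : X} {θ : ℝ} (hθ : 0 < θ)
    (hx : ∀ j, g j x < 0) (hy : ∀ j, g j y ≤ θ * g j x) :
    invBarrier g y ≤ θ⁻¹ * invBarrier g x := by
  rw [invBarrier, invBarrier, mul_sum]
  exact sum_le_sum fun j _ => neg_inv_le_inv_mul_neg_inv hθ (hx j) (hy j)

end InvBarrier

section BarrierGap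

variable {X κ : Type*} [AddCommGroup X] [Module ℝ X] [Fintype κ]

lemma ConvexOn.le_mul_of_nonpos {S : Set X} {g : X → ℝ} (hg : ConvexOn ℝ S g) {x z : X}
    (hx : x ∈ S) (hz : z ∈ S) (hgz : g z ≤ 0) {θ : ℝ} (hθ0 : 0 ≤ θ) (hθ1 : θ ≤ 1) :
    g (θ • x + (1 - θ) • z) ≤ θ * g x := by
  have := hg.2 hx hz hθ0 (sub_nonneg.mpr hθ1) (by ring)
  simp only [smul_eq_mul] at this
  linarith [mul_nonpos_of_nonneg_of_nonpos (sub_nonneg.mpr hθ1) hgz]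

theorem barrier_minimizer_gap_le {S : Set X} (hS : Convex ℝ S) {f : X → ℝ} (hf : ConvexOn ℝ S f)
    {g : κ → X → ℝ} (hg : ∀ j, ConvexOn ℝ S (g j)) {ρ : ℝ} (hρ : 0 ≤ ρ) {xt xs x' : X}
    (hxt : ∀ j, g j xt ≤ 0)
    (hxtopt : ∀ y ∈ S, (∀ j, g j y < 0) → f xt + ρ * invBarrier g xt ≤ f y + ρ * invBarrier g y)
    (hxs : xs ∈ S) (hgxs : ∀ j, g j xs ≤ 0) (hx' : x' ∈ S) (hgx' : ∀ j, g j x' < 0)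
    {θ : ℝ} (hθ0 : 0 < θ) (hθ1 : θ ≤ 1) :
    f xt - f xs ≤ θ * (f x' - f xs) + ρ * (θ⁻¹ * invBarrier g x') := by
  set y := θ • x' + (1 - θ) • xs
  have hyS : y ∈ S := hS hx' hxs hθ0.le (sub_nonneg.mpr hθ1) (by ring)
  have hgy : ∀ j, g j y ≤ θ * g j x' := fun j =>
    (hg j).le_mul_of_nonpos hx' hxs (hgxs j) hθ0.le hθ1
  have hgy_neg : ∀ j, g j y < 0 := fun j =>
    (hgy j).trans_lt (mul_neg_of_pos_of_neg hθ0 (hgx' j))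
  have hfy : f y ≤ θ * f x' + (1 - θ) * f xs := by
    simpa only [smul_eq_mul] using hf.2 hx' hxs hθ0.le (sub_nonneg.mpr hθ1) (by ring)
  have hBy : ρ * invBarrier g y ≤ ρ * (θ⁻¹ * invBarrier g x') :=
    mul_le_mul_of_nonneg_left (invBarrier_le_inv_mul hθ0 hgx' hgy) hρ
  have hBxt : 0 ≤ ρ * invBarrier g xt := mul_nonneg hρ (invBarrier_nonneg hxt)
  linarith [hxtopt y hyS hgy_neg]

end BarrierGap

lemma exists_weight_add_barrier_le {D β ρ ε : ℝ} (hε : 0 < ε) (hβ : 0 ≤ β)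
    (h : (D ≤ ε / 2 ∧ 0 < ρ ∧ ρ ≤ ε / (2 * β)) ∨
      (ε / 2 < D ∧ 0 < ρ ∧ ρ ≤ ε ^ 2 / (4 * D * β))) :
    ∃ θ : ℝ, 0 < θ ∧ θ ≤ 1 ∧ θ * D + ρ * (θ⁻¹ * β) ≤ ε := by
  rcases h with ⟨hD, -, hρ⟩ | ⟨hD, -, hρ⟩
  · refine ⟨1, one_pos, le_rfl, ?_⟩
    have := mul_le_of_le_div₀ hε.le (by positivity) hρ
    linarith
  · have hD0 : 0 < D := by linarith
    refine ⟨ε / (2 * D), by positivity, (div_le_one (by positivity)).mpr (by linarith), ?_⟩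
    have hρ' := mul_le_of_le_div₀ (by positivity) (by positivity) hρ
    have hθD : ε / (2 * D) * D = ε / 2 := by field_simp
    have hθβ : ρ * ((ε / (2 * D))⁻¹ * β) = ρ * (4 * D * β) / (2 * ε) := by field_simp; ring
    have hβρ : ρ * (4 * D * β) / (2 * ε) ≤ ε / 2 := by
      rw [div_le_iff₀ (by positivity)]
      nlinarith
    linarith

section Separable

variable {ι : Type*} {E : ι → Type*} [∀ i, AddCommGroup (E i)] [∀ i, Module ℝ (E i)]

lemma convexOn_univ_sum_apply [Fintype ι] {f : (i : ι) → E i → ℝ}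
    (hf : ∀ i, ConvexOn ℝ Set.univ (f i)) :
    ConvexOn ℝ Set.univ fun x : (i : ι) → E i => ∑ i, f i (x i) := by
  refine ⟨convex_univ, fun x _ y _ a b ha hb hab => ?_⟩
  simp only [Pi.add_apply, Pi.smul_apply, smul_eq_mul, mul_sum, ← sum_add_distrib]
  exact sum_le_sum fun i _ => (hf i).2 (Set.mem_univ _) (Set.mem_univ _) ha hb hab

lemma ConvexOn.comp_apply {i : ι} {S : Set (E i)} {g : E i → ℝ} (hg : ConvexOn ℝ S g) :
    ConvexOn ℝ {x : (i : ι) → E i | x i ∈ S} fun x => g (x i) :=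
  hg.comp_linearMap (LinearMap.proj i)

end Separable

lemma convex_setOf_sum_mulVec_eq {ι : Type*} [Fintype ι] {m : ℕ} {d : ι → ℕ}
    (A : (i : ι) → Matrix (Fin m) (Fin (d i)) ℝ) (c : Fin m → ℝ) :
    Convex ℝ {x : (i : ι) → EuclideanSpace ℝ (Fin (d i)) | ∑ i, (A i).mulVec (x i) = c} := by
  intro x hx y hy a b _ _ hab
  simp only [Set.mem_ofPred_eq] at hx hy ⊢
  simp only [Pi.add_apply, Pi.smul_apply, WithLp.ofLp_add, WithLp.ofLp_smul, Matrix.mulVec_add,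
    Matrix.mulVec_smul, sum_add_distrib, ← smul_sum, hx, hy, ← add_smul, hab, one_smul]

theorem stmt_11_general (n m : ℕ) (d : Fin n → ℕ)
    (f : (i : Fin n) → EuclideanSpace ℝ (Fin (d i)) → ℝ)
    (hfconv : ∀ i, ConvexOn ℝ Set.univ (f i))
    (q : Fin n → ℕ)
    (g : (i : Fin n) → Fin (q i) → EuclideanSpace ℝ (Fin (d i)) → ℝ)
    (hgconv : ∀ i j, ConvexOn ℝ Set.univ (g i j))
    (A : (i : Fin n) → Matrix (Fin m) (Fin (d i)) ℝ) (c : Fin m → ℝ)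
    (ρ : ℝ)
    (B : (i : Fin n) → EuclideanSpace ℝ (Fin (d i)) → ℝ)
    (hB : ∀ i z, B i z = ∑ j, -(g i j z)⁻¹)
    -- x* : an optimal solution of (P)
    (xstar : (i : Fin n) → EuclideanSpace ℝ (Fin (d i)))
    (hxstarfeas : (∑ i, (A i).mulVec (xstar i)) = c ∧ ∀ i j, g i j (xstar i) ≤ 0)
    -- x̃* : an optimal solution of the barrier problem (P_ρ)
    (xt : (i : Fin n) → EuclideanSpace ℝ (Fin (d i)))
    (hxtfeas : (∑ i, (A i).mulVec (xt i)) = c ∧ ∀ i j, g i j (xt i) < 0)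
    (hxtopt : ∀ y : (i : Fin n) → EuclideanSpace ℝ (Fin (d i)),
      ((∑ i, (A i).mulVec (y i)) = c ∧ ∀ i j, g i j (y i) < 0) →
      (∑ i, (f i (xt i) + ρ * B i (xt i))) ≤ ∑ i, (f i (y i) + ρ * B i (y i)))
    -- f̲ : a lower bound on the optimal value f* of (P)
    (flow : ℝ) (hflow : flow ≤ ∑ i, f i (xstar i))
    -- x' : a feasible point of (P_ρ)
    (x' : (i : Fin n) → EuclideanSpace ℝ (Fin (d i)))
    (hx' : (∑ i, (A i).mulVec (x' i)) = c ∧ ∀ i j, g i j (x' i) < 0)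
    (ε : ℝ) (hε : 0 < ε)
    (hρ : ((∑ i, f i (x' i)) - flow ≤ ε / 2 ∧
            0 < ρ ∧ ρ ≤ ε / (2 * ∑ i, B i (x' i))) ∨
          (ε / 2 < (∑ i, f i (x' i)) - flow ∧
            0 < ρ ∧ ρ ≤ ε^2 / (4 * ((∑ i, f i (x' i)) - flow) * ∑ i, B i (x' i)))) :
    (∑ i, f i (xt i)) - (∑ i, f i (xstar i)) ≤ ε := by
  set G : (Σ i, Fin (q i)) → ((i : Fin n) → EuclideanSpace ℝ (Fin (d i))) → ℝ :=
    fun k x => g k.1 k.2 (x k.1)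
  have hS := convex_setOf_sum_mulVec_eq A c
  have hF := (convexOn_univ_sum_apply hfconv).subset (Set.subset_univ _) hS
  have hG : ∀ k, ConvexOn ℝ {x | ∑ i, (A i).mulVec (x i) = c} (G k) := fun k =>
    ((hgconv k.1 k.2).comp_apply (E := fun i => EuclideanSpace ℝ (Fin (d i)))).subset
      (fun _ _ => Set.mem_univ _) hS
  have hBG : ∀ x, ∑ i, B i (x i) = invBarrier G x := fun x => by
    simp only [hB, invBarrier, G, Fintype.sum_sigma]
  have hβ : 0 ≤ ∑ i, B i (x' i) := hBG x' ▸ invBarrier_nonneg (g := G) fun k => (hx'.2 k.1 k.2).le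
  obtain ⟨θ, hθ0, hθ1, hθ⟩ := exists_weight_add_barrier_le hε hβ hρ
  have hρ0 : 0 ≤ ρ := by rcases hρ with ⟨-, h, -⟩ | ⟨-, h, -⟩ <;> exact h.le
  have hgap := barrier_minimizer_gap_le hS hF hG hρ0 (fun k => (hxtfeas.2 k.1 k.2).le)
    (fun y hy hgy => by
      simpa only [sum_add_distrib, ← mul_sum, hBG] using hxtopt y ⟨hy, fun i j => hgy ⟨i, j⟩⟩)
    hxstarfeas.1 (fun k => hxstarfeas.2 k.1 k.2) hx'.1 (fun k => hx'.2 k.1 k.2) hθ0 hθ1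
  rw [← hBG] at hgap
  have hflow' := mul_le_mul_of_nonneg_left (sub_le_sub_left hflow (∑ i, f i (x' i))) hθ0.le
  linarith

/-- Lemma 2, optimality gap of the barrier problem.
All `f i` convex (and differentiable).  Let `x̃*` be optimal for the barrier
problem (P_ρ), `x*` optimal for (P), `f̲ ≤ f*` a lower bound, `x'` any feasible
point of (P_ρ) and `ε > 0`.  If either
(i) `f(x') − f̲ ≤ ε/2` and `0 < ρ ≤ ε/(2 B(x'))`, or
(ii) `f(x') − f̲ > ε/2` and `0 < ρ ≤ ε²/(4 (f(x') − f̲) B(x'))`,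
then `f(x̃*) − f* ≤ ε`. -/
theorem stmt_11 (n m : ℕ) (d : Fin n → ℕ)
    (f : (i : Fin n) → EuclideanSpace ℝ (Fin (d i)) → ℝ)
    (hfconv : ∀ i, ConvexOn ℝ Set.univ (f i))
    (hfdiff : ∀ i, Differentiable ℝ (f i))
    (q : Fin n → ℕ)
    (g : (i : Fin n) → Fin (q i) → EuclideanSpace ℝ (Fin (d i)) → ℝ)
    (hgconv : ∀ i j, ConvexOn ℝ Set.univ (g i j))
    (A : (i : Fin n) → Matrix (Fin m) (Fin (d i)) ℝ) (c : Fin m → ℝ)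
    (ρ : ℝ)
    (B : (i : Fin n) → EuclideanSpace ℝ (Fin (d i)) → ℝ)
    (hB : ∀ i z, B i z = ∑ j, -(g i j z)⁻¹)
    -- x* : an optimal solution of (P)
    (xstar : (i : Fin n) → EuclideanSpace ℝ (Fin (d i)))
    (hxstarfeas : (∑ i, (A i).mulVec (xstar i)) = c ∧ ∀ i j, g i j (xstar i) ≤ 0)
    (hxstaropt : ∀ y : (i : Fin n) → EuclideanSpace ℝ (Fin (d i)),
      ((∑ i, (A i).mulVec (y i)) = c ∧ ∀ i j, g i j (y i) ≤ 0) →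
      (∑ i, f i (xstar i)) ≤ ∑ i, f i (y i))
    -- x̃* : an optimal solution of the barrier problem (P_ρ)
    (xt : (i : Fin n) → EuclideanSpace ℝ (Fin (d i)))
    (hxtfeas : (∑ i, (A i).mulVec (xt i)) = c ∧ ∀ i j, g i j (xt i) < 0)
    (hxtopt : ∀ y : (i : Fin n) → EuclideanSpace ℝ (Fin (d i)),
      ((∑ i, (A i).mulVec (y i)) = c ∧ ∀ i j, g i j (y i) < 0) →
      (∑ i, (f i (xt i) + ρ * B i (xt i))) ≤ ∑ i, (f i (y i) + ρ * B i (y i)))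
    -- f̲ : a lower bound on the optimal value f* of (P)
    (flow : ℝ) (hflow : flow ≤ ∑ i, f i (xstar i))
    -- x' : a feasible point of (P_ρ)
    (x' : (i : Fin n) → EuclideanSpace ℝ (Fin (d i)))
    (hx' : (∑ i, (A i).mulVec (x' i)) = c ∧ ∀ i j, g i j (x' i) < 0)
    (ε : ℝ) (hε : 0 < ε)
    (hρ : ((∑ i, f i (x' i)) - flow ≤ ε / 2 ∧
            0 < ρ ∧ ρ ≤ ε / (2 * ∑ i, B i (x' i))) ∨
          (ε / 2 < (∑ i, f i (x' i)) - flow ∧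
            0 < ρ ∧ ρ ≤ ε^2 / (4 * ((∑ i, f i (x' i)) - flow) * ∑ i, B i (x' i)))) :
    (∑ i, f i (xt i)) - (∑ i, f i (xstar i)) ≤ ε :=
  stmt_11_general n m d f hfconv q g hgconv A c ρ B hB xstar hxstarfeas xt hxtfeas hxtopt flow hflow
    x' hx' ε hε hρ
end

section
/- Let g : ℝ^d → ℝ be convex and β-smooth, and β₁-Lipschitz continuous on {z : g(z) ≤ 0}. Let M > 0 and let x, y ∈ ℝ^d satisfy g(x) < 0, g(y) < 0, B(x) ≤ M, and B(y) ≤ M, where B(z) := −1/g(z). Then B(y) − B(x) − ⟨∇B(x), y − x⟩ ≥ ‖∇B(y) − ∇B(x)‖² / (8β₁²M³ + 4βM²). -/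
/-!
Write `p = B x`, `q = B y` and `D_f(y, x) = f y - f x - ⟪∇f x, y - x⟫`. Then `∇B = B² ∇g`, and
`D_B(y, x) = (q - p)² / q + p² D_g(y, x)` exactly. Convexity and `β`-smoothness of `g` give
co-coercivity, `‖∇g y - ∇g x‖² ≤ 2β D_g(y, x)`, and the Lipschitz bound on `{g < 0}` gives
`‖∇g y‖ ≤ β₁`. In `∇B y - ∇B x = (q² - p²) ∇g y + p² (∇g y - ∇g x)` each part is controlled by one
of the two terms of `D_B(y, x)` as soon as `p, q ≤ M`, and `(u + v)² ≤ (P + Q)(X + Y)` whenever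
`u² ≤ PX` and `v² ≤ QY` combines the two bounds.
-/

open RealInnerProductSpace Set AffineMap Topology

theorem sq_add_le_add_mul_add {u v P Q X Y : ℝ} (hP : 0 ≤ P) (hQ : 0 ≤ Q) (hX : 0 ≤ X)
    (hY : 0 ≤ Y) (hu : u ^ 2 ≤ P * X) (hv : v ^ 2 ≤ Q * Y) :
    (u + v) ^ 2 ≤ (P + Q) * (X + Y) := by
  have h : 2 * u * v ≤ P * Y + Q * X := by
    refine le_of_sq_le_sq ?_ (by positivity)
    nlinarith [sq_nonneg (P * Y - Q * X), mul_le_mul hu hv (sq_nonneg v) (by positivity)]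
  nlinarith

theorem norm_smul_sub_smul_le {𝕜 F : Type*} [NormedField 𝕜] [NormedAddCommGroup F]
    [NormedSpace 𝕜 F] (a b : 𝕜) (u w : F) :
    ‖a • u - b • w‖ ≤ ‖a - b‖ * ‖u‖ + ‖b‖ * ‖u - w‖ := by
  have : a • u - b • w = (a - b) • u + b • (u - w) := by
    rw [sub_smul, smul_sub]
    abel
  rw [this, ← norm_smul, ← norm_smul]
  exact norm_add_le _ _

section Bregman

variable {E : Type*} [NormedAddCommGroup E] [InnerProductSpace ℝ E] [CompleteSpace E]
  {g : E → ℝ}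

noncomputable def bregmanDiv (f : E → ℝ) (y x : E) : ℝ :=
  f y - f x - ⟪gradient f x, y - x⟫

theorem hasDerivAt_comp_lineMap {x y : E} {t : ℝ} (hg : DifferentiableAt ℝ g (lineMap x y t)) :
    HasDerivAt (fun s => g (lineMap x y s)) ⟪gradient g (lineMap x y t), y - x⟫ t := by
  rw [inner_gradient_left]
  exact hg.hasFDerivAt.comp_hasDerivAt t hasDerivAt_lineMap

theorem bregmanDiv_nonneg (hconv : ConvexOn ℝ univ g) {x : E} (hg : DifferentiableAt ℝ g x)
    (y : E) : 0 ≤ bregmanDiv g y x := by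
  have hline : ConvexOn ℝ univ (fun s => g (lineMap x y s)) :=
    hconv.comp_affineMap (lineMap x y)
  have hd := hasDerivAt_comp_lineMap (x := x) (y := y) (t := 0) (by simpa using hg)
  have := hline.le_slope_of_hasDerivAt (mem_univ 0) (mem_univ 1) one_pos hd
  rw [lineMap_apply_zero] at this
  simpa [bregmanDiv, slope] using this

theorem bregmanDiv_le_of_lipschitz_gradient (hg : Differentiable ℝ g) {β : ℝ}
    (hsmooth : ∀ z w, ‖gradient g z - gradient g w‖ ≤ β * ‖z - w‖) (y w : E) :
    bregmanDiv g w y ≤ β / 2 * ‖w - y‖ ^ 2 := by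
  set h : ℝ → ℝ := fun s =>
    g (lineMap y w s) - s * ⟪gradient g y, w - y⟫ - β / 2 * s ^ 2 * ‖w - y‖ ^ 2
  have hh : ∀ s, HasDerivAt h
      (⟪gradient g (lineMap y w s) - gradient g y, w - y⟫ - β * s * ‖w - y‖ ^ 2) s := by
    intro s
    refine (((hasDerivAt_comp_lineMap (hg _)).sub ((hasDerivAt_id s).mul_const _)).sub
      (((hasDerivAt_pow 2 s).const_mul (β / 2)).mul_const _)).congr_deriv ?_
    rw [inner_sub_left]
    ring
  obtain ⟨c, ⟨hc₀, -⟩, hc⟩ := exists_hasDerivAt_eq_slope h _ zero_lt_one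
    (fun s _ => (hh s).continuousAt.continuousWithinAt) (fun s _ => hh s)
  have hderiv : ⟪gradient g (lineMap y w c) - gradient g y, w - y⟫ ≤ β * c * ‖w - y‖ ^ 2 :=
    calc _ ≤ ‖gradient g (lineMap y w c) - gradient g y‖ * ‖w - y‖ := real_inner_le_norm _ _
      _ ≤ β * ‖lineMap y w c - y‖ * ‖w - y‖ := by gcongr; exact hsmooth _ _
      _ = β * c * ‖w - y‖ ^ 2 := by
        rw [← dist_eq_norm, dist_lineMap_left, Real.norm_of_nonneg hc₀.le, dist_eq_norm']
        ring
  simp only [h, lineMap_apply_one, lineMap_apply_zero, zero_mul, sub_zero, one_mul, one_pow,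
    zero_pow two_ne_zero, mul_zero, div_one] at hc
  unfold bregmanDiv
  linarith

theorem sq_norm_gradient_sub_le_bregmanDiv (hconv : ConvexOn ℝ univ g) (hg : Differentiable ℝ g)
    {β : ℝ} (hβ : 0 ≤ β) (hsmooth : ∀ z w, ‖gradient g z - gradient g w‖ ≤ β * ‖z - w‖)
    (y x : E) : ‖gradient g y - gradient g x‖ ^ 2 ≤ 2 * β * bregmanDiv g y x := by
  set G := gradient g y - gradient g x
  rcases hβ.eq_or_lt with rfl | hβ
  · have : ‖G‖ ≤ 0 := by simpa using hsmooth y x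
    simp [norm_le_zero_iff.1 this]
  -- `w` is the gradient step from `y` for `g - ⟪∇g x, ·⟫`, a convex function minimised at `x`.
  set w := y - β⁻¹ • G
  have hwx := bregmanDiv_nonneg hconv (hg x) w
  have hwy := bregmanDiv_le_of_lipschitz_gradient hg hsmooth y w
  have hw : w - y = -(β⁻¹ • G) := by simp [w]
  have hsplit : bregmanDiv g w x = bregmanDiv g w y + bregmanDiv g y x - β⁻¹ * ‖G‖ ^ 2 := by
    have : w - x = (w - y) + (y - x) := by abel
    simp only [bregmanDiv, this, inner_add_right, hw, inner_neg_right, real_inner_smul_right, G,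
      inner_sub_left, ← real_inner_self_eq_norm_sq]
    ring
  rw [hw, norm_neg, norm_smul, Real.norm_of_nonneg (inv_nonneg.2 hβ.le)] at hwy
  have key : β⁻¹ * ‖G‖ ^ 2 ≤ 2 * bregmanDiv g y x := by
    have : β / 2 * (β⁻¹ * ‖G‖) ^ 2 = β⁻¹ * ‖G‖ ^ 2 / 2 := by field_simp
    linarith
  calc ‖G‖ ^ 2 = β * (β⁻¹ * ‖G‖ ^ 2) := by field_simp
    _ ≤ β * (2 * bregmanDiv g y x) := by gcongr
    _ = 2 * β * bregmanDiv g y x := by ring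

theorem norm_gradient_le_of_lipschitzOn {s : Set E} {x : E} {K : NNReal} (hs : s ∈ 𝓝 x)
    (hlip : LipschitzOnWith K g s) : ‖gradient g x‖ ≤ K := by
  rw [gradient, LinearIsometryEquiv.norm_map]
  exact norm_fderiv_le_of_lipschitzOn ℝ hs hlip

variable {B : E → ℝ}

theorem gradient_eq_sq_smul_of_eq_neg_inv (hB : ∀ z, B z = -(g z)⁻¹) {z : E}
    (hg : DifferentiableAt ℝ g z) (hz : g z ≠ 0) : gradient B z = B z ^ 2 • gradient g z := by
  obtain rfl : B = fun z => -(g z)⁻¹ := funext hB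
  have hinv : HasDerivAt (fun r : ℝ => -r⁻¹) ((g z) ^ 2)⁻¹ (g z) := by
    have h := (hasDerivAt_inv hz).neg
    rwa [neg_neg] at h
  refine ((hinv.comp_hasFDerivAt z hg.hasFDerivAt).hasGradientAt).gradient.trans ?_
  simp [gradient, map_smul]

theorem bregmanDiv_eq_of_eq_neg_inv (hB : ∀ z, B z = -(g z)⁻¹) {x y : E}
    (hg : DifferentiableAt ℝ g x) (hx : g x ≠ 0) (hy : g y ≠ 0) :
    bregmanDiv B y x = (B y - B x) ^ 2 / B y + B x ^ 2 * bregmanDiv g y x := by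
  simp only [bregmanDiv, gradient_eq_sq_smul_of_eq_neg_inv hB hg hx, real_inner_smul_left, hB]
  field_simp
  ring

theorem norm_gradient_sub_le_of_eq_neg_inv (hB : ∀ z, B z = -(g z)⁻¹) {x y : E}
    (hgx : DifferentiableAt ℝ g x) (hgy : DifferentiableAt ℝ g y) (hx : g x ≠ 0) (hy : g y ≠ 0) :
    ‖gradient B y - gradient B x‖
      ≤ |B y ^ 2 - B x ^ 2| * ‖gradient g y‖ + B x ^ 2 * ‖gradient g y - gradient g x‖ := by
  rw [gradient_eq_sq_smul_of_eq_neg_inv hB hgy hy, gradient_eq_sq_smul_of_eq_neg_inv hB hgx hx]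
  refine (norm_smul_sub_smul_le _ _ _ _).trans_eq ?_
  rw [Real.norm_eq_abs, Real.norm_eq_abs, abs_sq]

theorem sq_norm_gradient_sub_div_le_bregmanDiv_of_eq_neg_inv (hB : ∀ z, B z = -(g z)⁻¹)
    {x y : E} (hgx : DifferentiableAt ℝ g x) (hgy : DifferentiableAt ℝ g y) (hx : g x < 0)
    (hy : g y < 0) {M β β₁ : ℝ} (hBx : B x ≤ M) (hBy : B y ≤ M) (hβ : 0 ≤ β)
    (hgrad : ‖gradient g y‖ ≤ β₁) (hD : 0 ≤ bregmanDiv g y x)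
    (hco : ‖gradient g y - gradient g x‖ ^ 2 ≤ 2 * β * bregmanDiv g y x) :
    ‖gradient B y - gradient B x‖ ^ 2 / (8 * β₁ ^ 2 * M ^ 3 + 4 * β * M ^ 2)
      ≤ bregmanDiv B y x := by
  have hBx₀ : 0 < B x := by rw [hB]; exact neg_pos.2 (inv_lt_zero.2 hx)
  have hBy₀ : 0 < B y := by rw [hB]; exact neg_pos.2 (inv_lt_zero.2 hy)
  have hM : 0 < M := hBx₀.trans_le hBx
  have h₁ : (|B y ^ 2 - B x ^ 2| * ‖gradient g y‖) ^ 2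
      ≤ 8 * β₁ ^ 2 * M ^ 3 * ((B y - B x) ^ 2 / B y) := by
    have hsum : (B y + B x) ^ 2 * B y ≤ (M + M) ^ 2 * M := by gcongr
    rw [mul_pow, sq_abs, mul_div_assoc', le_div_iff₀ hBy₀]
    calc (B y ^ 2 - B x ^ 2) ^ 2 * ‖gradient g y‖ ^ 2 * B y
        = (B y - B x) ^ 2 * ((B y + B x) ^ 2 * B y) * ‖gradient g y‖ ^ 2 := by ring
      _ ≤ (B y - B x) ^ 2 * ((M + M) ^ 2 * M) * β₁ ^ 2 := by gcongr
      _ ≤ 8 * β₁ ^ 2 * M ^ 3 * (B y - B x) ^ 2 := by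
        nlinarith [mul_nonneg (mul_nonneg (sq_nonneg (B y - B x)) (sq_nonneg β₁)) hM.le]
  have h₂ : (B x ^ 2 * ‖gradient g y - gradient g x‖) ^ 2
      ≤ 4 * β * M ^ 2 * (B x ^ 2 * bregmanDiv g y x) := by
    have hsq : B x ^ 2 ≤ M ^ 2 := by gcongr
    have hβD : 0 ≤ β * B x ^ 2 * bregmanDiv g y x := by positivity
    calc (B x ^ 2 * ‖gradient g y - gradient g x‖) ^ 2
        ≤ (B x ^ 2) ^ 2 * (2 * β * bregmanDiv g y x) := by rw [mul_pow]; gcongr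
      _ ≤ 4 * β * M ^ 2 * (B x ^ 2 * bregmanDiv g y x) := by
        nlinarith [mul_le_mul_of_nonneg_left hsq hβD]
  rw [bregmanDiv_eq_of_eq_neg_inv hB hgx hx.ne hy.ne]
  refine div_le_of_le_mul₀ (by positivity) (by positivity) ?_
  calc ‖gradient B y - gradient B x‖ ^ 2
      ≤ (|B y ^ 2 - B x ^ 2| * ‖gradient g y‖
          + B x ^ 2 * ‖gradient g y - gradient g x‖) ^ 2 := by
        gcongr
        exact norm_gradient_sub_le_of_eq_neg_inv hB hgx hgy hx.ne hy.ne
    _ ≤ (8 * β₁ ^ 2 * M ^ 3 + 4 * β * M ^ 2)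
          * ((B y - B x) ^ 2 / B y + B x ^ 2 * bregmanDiv g y x) :=
        sq_add_le_add_mul_add (by positivity) (by positivity) (by positivity) (by positivity) h₁ h₂
    _ = _ := mul_comm _ _

end Bregman

theorem stmt_12_general (dd : ℕ) (g : EuclideanSpace ℝ (Fin dd) → ℝ)
    (hconv : ConvexOn ℝ Set.univ g) (hdiff : Differentiable ℝ g)
    (β β₁ : ℝ)
    (hsmooth : ∀ z w : EuclideanSpace ℝ (Fin dd),
      ‖gradient g z - gradient g w‖ ≤ β * ‖z - w‖)
    (hlip : ∀ z w : EuclideanSpace ℝ (Fin dd),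
      g z ≤ 0 → g w ≤ 0 → |g z - g w| ≤ β₁ * ‖z - w‖)
    (M : ℝ)
    (x y : EuclideanSpace ℝ (Fin dd)) (hx : g x < 0) (hy : g y < 0)
    (B : EuclideanSpace ℝ (Fin dd) → ℝ) (hB : ∀ z, B z = -(g z)⁻¹)
    (hBx : B x ≤ M) (hBy : B y ≤ M) :
    ‖gradient B y - gradient B x‖^2 / (8 * β₁^2 * M^3 + 4 * β * M^2) ≤
      B y - B x - ⟪gradient B x, y - x⟫ := by
  obtain rfl | hxy := eq_or_ne x y
  · simp
  have hxy₀ : 0 < ‖x - y‖ := norm_pos_iff.2 (sub_ne_zero.2 hxy)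
  have hβ : 0 ≤ β := nonneg_of_mul_nonneg_left ((norm_nonneg _).trans (hsmooth x y)) hxy₀
  have hβ₁ : 0 ≤ β₁ :=
    nonneg_of_mul_nonneg_left ((abs_nonneg _).trans (hlip x y hx.le hy.le)) hxy₀
  have hgrad : ‖gradient g y‖ ≤ β₁ := by
    have hlipOn : LipschitzOnWith β₁.toNNReal g {z | g z < 0} :=
      .of_dist_le' fun z hz w hw => by
        simpa only [Real.dist_eq, dist_eq_norm, Real.norm_eq_abs] using hlip z w hz.le hw.le
    simpa only [Real.coe_toNNReal _ hβ₁] using norm_gradient_le_of_lipschitzOn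
      ((isOpen_lt hdiff.continuous continuous_const).mem_nhds hy) hlipOn
  exact sq_norm_gradient_sub_div_le_bregmanDiv_of_eq_neg_inv hB (hdiff x) (hdiff y) hx hy hBx hBy
    hβ hgrad (bregmanDiv_nonneg hconv (hdiff x) y)
    (sq_norm_gradient_sub_le_bregmanDiv hconv hdiff hβ hsmooth y x)

/-- Lemma 3, local smoothness of the inverse barrier.
`g` convex and `β`-smooth on `ℝ^d`, `β₁`-Lipschitz on `{z : g z ≤ 0}`; `M > 0`;
`x, y` with `g x < 0`, `g y < 0`, `B x ≤ M`, `B y ≤ M`, where `B z = −1/g z`.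
Then `B y − B x − ⟪∇B x, y − x⟫ ≥ ‖∇B y − ∇B x‖² / (8 β₁² M³ + 4 β M²)`. -/
theorem stmt_12 (dd : ℕ) (g : EuclideanSpace ℝ (Fin dd) → ℝ)
    (hconv : ConvexOn ℝ Set.univ g) (hdiff : Differentiable ℝ g)
    (β β₁ : ℝ)
    (hsmooth : ∀ z w : EuclideanSpace ℝ (Fin dd),
      ‖gradient g z - gradient g w‖ ≤ β * ‖z - w‖)
    (hlip : ∀ z w : EuclideanSpace ℝ (Fin dd),
      g z ≤ 0 → g w ≤ 0 → |g z - g w| ≤ β₁ * ‖z - w‖)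
    (M : ℝ) (hM : 0 < M)
    (x y : EuclideanSpace ℝ (Fin dd)) (hx : g x < 0) (hy : g y < 0)
    (B : EuclideanSpace ℝ (Fin dd) → ℝ) (hB : ∀ z, B z = -(g z)⁻¹)
    (hBx : B x ≤ M) (hBy : B y ≤ M) :
    ‖gradient B y - gradient B x‖^2 / (8 * β₁^2 * M^3 + 4 * β * M^2) ≤
      B y - B x - ⟪gradient B x, y - x⟫ :=
  stmt_12_general dd g hconv hdiff β β₁ hsmooth hlip M x y hx hy B hB hBx hBy
end

section
/- Let g : ℝ^d → ℝ be convex and differentiable with g(x) < 0 and g(y) < 0, and set u := |1/g(x)² − 1/g(y)²| and Δ := 1/g(x) − 1/g(y) − ⟨∇g(x), y − x⟩/g(x)². Then Δ ≥ (|g(y)| · min(g(x)², g(y)²) / 4) · u². -/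
open RealInnerProductSpace

/-!
Convexity gives `⟪∇g x, y - x⟫ ≤ g y - g x`, so with `a = g x`, `b = g y` the residual is at least
the scalar Bregman residual of `s ↦ -1/s`, namely `(a - b)² / (a² |b|)`. Since
`1/a² - 1/b² = (b - a)(b + a)/(a² b²)` and `(a + b)² ≤ 4 max(a², b²)`, multiplying by
`min(a², b²)` turns `(a + b)²` into at most `4 a² b²`, which is the claimed bound.
-/

theorem ConvexOn.hasFDerivAt_apply_sub_le {E : Type*} [NormedAddCommGroup E] [NormedSpace ℝ E]
    {s : Set E} {f : E → ℝ} {f' : E →L[ℝ] ℝ} {x y : E} (hf : ConvexOn ℝ s f)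
    (hx : x ∈ s) (hy : y ∈ s) (hf' : HasFDerivAt f f' x) :
    f' (y - x) ≤ f y - f x := by
  have hline : ConvexOn ℝ (AffineMap.lineMap (k := ℝ) x y ⁻¹' s) (f ∘ AffineMap.lineMap x y) :=
    hf.comp_affineMap _
  have hderiv : HasDerivAt (f ∘ AffineMap.lineMap (k := ℝ) x y) (f' (y - x)) 0 := by
    refine HasFDerivAt.comp_hasDerivAt (0 : ℝ) ?_ AffineMap.hasDerivAt_lineMap
    simpa using hf'
  simpa [slope_def_field] using
    hline.le_slope_of_hasDerivAt (x := 0) (y := 1) (by simpa using hx) (by simpa using hy)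
      one_pos hderiv

theorem ConvexOn.inner_gradient_sub_le {E : Type*} [NormedAddCommGroup E] [InnerProductSpace ℝ E]
    [CompleteSpace E] {s : Set E} {f : E → ℝ} {x y : E} (hf : ConvexOn ℝ s f)
    (hx : x ∈ s) (hy : y ∈ s) (hd : DifferentiableAt ℝ f x) :
    ⟪gradient f x, y - x⟫ ≤ f y - f x := by
  simpa using hf.hasFDerivAt_apply_sub_le hx hy (hasGradientAt_iff_hasFDerivAt.mp hd.hasGradientAt)

theorem min_sq_mul_add_sq_le (a b : ℝ) : min (a ^ 2) (b ^ 2) * (a + b) ^ 2 ≤ 4 * a ^ 2 * b ^ 2 := by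
  have hmax : (a + b) ^ 2 ≤ 4 * max (a ^ 2) (b ^ 2) := by
    nlinarith [add_sq_le (a := a) (b := b), le_max_left (a ^ 2) (b ^ 2),
      le_max_right (a ^ 2) (b ^ 2)]
  calc min (a ^ 2) (b ^ 2) * (a + b) ^ 2 ≤ min (a ^ 2) (b ^ 2) * (4 * max (a ^ 2) (b ^ 2)) := by
        gcongr
    _ = 4 * a ^ 2 * b ^ 2 := by rw [mul_left_comm, min_mul_max, mul_assoc]

theorem abs_mul_min_sq_mul_sq_inv_sq_sub_inv_sq_le {a b : ℝ} (ha : a ≠ 0) (hb : b ≠ 0) :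
    |b| * min (a ^ 2) (b ^ 2) / 4 * (1 / a ^ 2 - 1 / b ^ 2) ^ 2 ≤ (a - b) ^ 2 / (a ^ 2 * |b|) := by
  calc |b| * min (a ^ 2) (b ^ 2) / 4 * (1 / a ^ 2 - 1 / b ^ 2) ^ 2
        = |b| * (a - b) ^ 2 / (4 * a ^ 4 * b ^ 4) * (min (a ^ 2) (b ^ 2) * (a + b) ^ 2) := by
          field_simp
          ring
    _ ≤ |b| * (a - b) ^ 2 / (4 * a ^ 4 * b ^ 4) * (4 * a ^ 2 * b ^ 2) :=
          mul_le_mul_of_nonneg_left (min_sq_mul_add_sq_le a b) (by positivity)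
    _ = (a - b) ^ 2 / (a ^ 2 * |b|) := by
          rw [show b ^ 4 = |b| ^ 2 * b ^ 2 by rw [sq_abs]; ring]
          field_simp

/-- lower bound on the Bregman residual of the inverse barrier
via the difference of squared reciprocals.  For `g` convex and differentiable
with `g x < 0`, `g y < 0`, `u = |1/g(x)² − 1/g(y)²|` and
`Δ = 1/g(x) − 1/g(y) − ⟪∇g x, y − x⟫ / g(x)²`, one has
`Δ ≥ (|g y| · min(g(x)², g(y)²) / 4) · u²`. -/
theorem stmt_15 (dd : ℕ) (g : EuclideanSpace ℝ (Fin dd) → ℝ)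
    (hconv : ConvexOn ℝ Set.univ g) (hdiff : Differentiable ℝ g)
    (x y : EuclideanSpace ℝ (Fin dd)) (hx : g x < 0) (hy : g y < 0)
    (u Δ : ℝ)
    (hu : u = |1 / (g x)^2 - 1 / (g y)^2|)
    (hΔ : Δ = 1 / g x - 1 / g y - ⟪gradient g x, y - x⟫ / (g x)^2) :
    |g y| * min ((g x)^2) ((g y)^2) / 4 * u^2 ≤ Δ := by
  have hgrad := hconv.inner_gradient_sub_le (Set.mem_univ x) (Set.mem_univ y) (hdiff x)
  rw [hu, hΔ, sq_abs]
  calc |g y| * min ((g x)^2) ((g y)^2) / 4 * (1 / (g x)^2 - 1 / (g y)^2) ^ 2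
        ≤ (g x - g y) ^ 2 / ((g x) ^ 2 * |g y|) :=
          abs_mul_min_sq_mul_sq_inv_sq_sub_inv_sq_le hx.ne hy.ne
    _ = 1 / g x - 1 / g y - (g y - g x) / (g x)^2 := by
          rw [abs_of_neg hy]
          field_simp [hx.ne, hy.ne]
          ring
    _ ≤ 1 / g x - 1 / g y - ⟪gradient g x, y - x⟫ / (g x)^2 := by gcongr
end

section
/- Let F : ℝ^N → ℝ be differentiable and σ-strongly convex for some σ > 0, let W ∈ ℝ^{N×N} be a nonzero symmetric positive semidefinite matrix with smallest nonzero eigenvalue λ_W, and let x, y ∈ ℝ^N satisfy x − y ∈ Range(W). Then F(x) − F(y) ≤ ‖∇F(x)‖_W² / (2σλ_W), where ‖v‖_W := √(vᵀWv). -/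
/-!
Strong convexity between `x` and `y` bounds `F x - F y` by `⟪g, d⟫ - σ/2 ‖d‖²` with `g = ∇F x`
and `d = x - y = W u`. On the range of the positive operator `W`, the spectral gap gives
`λ_W ⟪u, W u⟫ ≤ ‖W u‖²`, so the bound is at most `⟪g, W u⟫ - (σ λ_W / 2) ⟪u, W u⟫`, and
nonnegativity of the `W`-form at `g - σ λ_W u` bounds this by `⟪g, W g⟫ / (2 σ λ_W)`.
-/

open RealInnerProductSpace

namespace LinearMap.IsPositive

variable {E : Type*} [NormedAddCommGroup E] [InnerProductSpace ℝ E] {T : E →ₗ[ℝ] E}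

theorem inner_map_sub_le_div (hT : T.IsPositive) {c : ℝ} (hc : 0 < c) (g u : E) :
    ⟪g, T u⟫ - c / 2 * ⟪u, T u⟫ ≤ ⟪g, T g⟫ / (2 * c) := by
  have hnonneg := hT.inner_nonneg_right (g - c • u)
  have hsymm : ⟪u, T g⟫ = ⟪g, T u⟫ := by rw [← hT.isSymmetric u g, real_inner_comm]
  simp only [map_sub, map_smul, inner_sub_left, inner_sub_right, real_inner_smul_left,
    real_inner_smul_right, hsymm] at hnonneg
  rw [le_div_iff₀ (by positivity)]
  nlinarith

theorem mul_inner_map_le_norm_map_sq [FiniteDimensional ℝ E] (hT : T.IsPositive) {lam : ℝ}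
    (hlam : ∀ μ, μ ≠ 0 → Module.End.HasEigenvalue T μ → lam ≤ μ) (u : E) :
    lam * ⟪u, T u⟫ ≤ ‖T u‖ ^ 2 := by
  let b := hT.isSymmetric.eigenvectorBasis rfl
  let μ := hT.isSymmetric.eigenvalues (rfl : Module.finrank ℝ E = _)
  have hcoord : ∀ i, ⟪b i, T u⟫ = μ i * ⟪b i, u⟫ := fun i => by
    simpa only [OrthonormalBasis.repr_apply_apply, RCLike.ofReal_real_eq_id, id_eq] using
      hT.isSymmetric.eigenvectorBasis_apply_self_apply rfl u i
  rw [← real_inner_self_eq_norm_sq, ← b.sum_inner_mul_inner u (T u),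
    ← b.sum_inner_mul_inner (T u) (T u), Finset.mul_sum]
  refine Finset.sum_le_sum fun i _ => ?_
  rw [real_inner_comm (b i) u, real_inner_comm (b i) (T u), hcoord]
  have hμ_nonneg : 0 ≤ μ i := hT.nonneg_eigenvalues rfl i
  have hlam_mul : lam * μ i ≤ μ i * μ i := by
    rcases eq_or_ne (μ i) 0 with h | h
    · simp [h]
    · exact mul_le_mul_of_nonneg_right (hlam _ h (hT.isSymmetric.hasEigenvalue_eigenvalues rfl i))
        hμ_nonneg
  nlinarith [sq_nonneg ⟪b i, u⟫]

end LinearMap.IsPositive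

theorem sub_le_inner_gradient_sub_of_strongConvex {E : Type*} [NormedAddCommGroup E]
    [InnerProductSpace ℝ E] [CompleteSpace E] {F : E → ℝ} {σ : ℝ}
    (hsc : ∀ z w : E, F w ≥ F z + ⟪gradient F z, w - z⟫ + σ / 2 * ‖w - z‖ ^ 2) (x y : E) :
    F x - F y ≤ ⟪gradient F x, x - y⟫ - σ / 2 * ‖x - y‖ ^ 2 := by
  have h := hsc x y
  rw [← neg_sub x y, inner_neg_right, norm_neg] at h
  linarith

theorem stmt_18_general (N : ℕ) (F : EuclideanSpace ℝ (Fin N) → ℝ)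
    (σ : ℝ) (hσ : 0 < σ)
    (hsc : ∀ z w : EuclideanSpace ℝ (Fin N),
      F w ≥ F z + ⟪gradient F z, w - z⟫ + σ / 2 * ‖w - z‖^2)
    (W : Matrix (Fin N) (Fin N) ℝ)
    (hpsd : W.PosSemidef)
    (lamW : ℝ)
    (hlamW : IsLeast {μ : ℝ | μ ≠ 0 ∧
      Module.End.HasEigenvalue (Matrix.toEuclideanLin W) μ} lamW)
    (x y : EuclideanSpace ℝ (Fin N))
    (hxy : x - y ∈ LinearMap.range (Matrix.toEuclideanLin W)) :
    F x - F y ≤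
      (Real.sqrt ⟪gradient F x, Matrix.toEuclideanLin W (gradient F x)⟫)^2
        / (2 * σ * lamW) := by
  set T := Matrix.toEuclideanLin W
  set g := gradient F x
  have hT : T.IsPositive := Matrix.isPositive_toEuclideanLin_iff.2 hpsd
  have hlam_pos : 0 < lamW :=
    (eigenvalue_nonneg_of_nonneg hlamW.1.2 hT.re_inner_nonneg_right).lt_of_ne' hlamW.1.1
  obtain ⟨u, hu⟩ := hxy
  have hgap := hT.mul_inner_map_le_norm_map_sq (fun μ hμ hev => hlamW.2 ⟨hμ, hev⟩) u
  calc F x - F y ≤ ⟪g, T u⟫ - σ / 2 * ‖T u‖ ^ 2 :=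
        hu ▸ sub_le_inner_gradient_sub_of_strongConvex hsc x y
    _ ≤ ⟪g, T u⟫ - σ * lamW / 2 * ⟪u, T u⟫ := by nlinarith
    _ ≤ ⟪g, T g⟫ / (2 * (σ * lamW)) := hT.inner_map_sub_le_div (by positivity) g u
    _ = _ := by rw [Real.sq_sqrt (hT.inner_nonneg_right g), mul_assoc]

/-- strongly convex gap bound in the `W`-seminorm.
`F` differentiable and `σ`-strongly convex (`σ > 0`), `W` a nonzero symmetric
PSD matrix with smallest nonzero eigenvalue `λ_W`, and `x − y ∈ Range W`.
Then `F x − F y ≤ ‖∇F x‖_W² / (2 σ λ_W)`, where `‖v‖_W = √(vᵀ W v)`. -/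
theorem stmt_18 (N : ℕ) (F : EuclideanSpace ℝ (Fin N) → ℝ)
    (hdiff : Differentiable ℝ F)
    (σ : ℝ) (hσ : 0 < σ)
    (hsc : ∀ z w : EuclideanSpace ℝ (Fin N),
      F w ≥ F z + ⟪gradient F z, w - z⟫ + σ / 2 * ‖w - z‖^2)
    (W : Matrix (Fin N) (Fin N) ℝ)
    (hsymm : W.IsSymm) (hpsd : W.PosSemidef) (hW0 : W ≠ 0)
    (lamW : ℝ)
    (hlamW : IsLeast {μ : ℝ | μ ≠ 0 ∧
      Module.End.HasEigenvalue (Matrix.toEuclideanLin W) μ} lamW)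
    (x y : EuclideanSpace ℝ (Fin N))
    (hxy : x - y ∈ LinearMap.range (Matrix.toEuclideanLin W)) :
    F x - F y ≤
      (Real.sqrt ⟪gradient F x, Matrix.toEuclideanLin W (gradient F x)⟫)^2
        / (2 * σ * lamW) :=
  stmt_18_general N F σ hσ hsc W hpsd lamW hlamW x y hxy
end

section
/- Let F : ℝ^N → ℝ be convex and differentiable, let W ∈ ℝ^{N×N} be a nonzero symmetric positive semidefinite matrix with smallest nonzero eigenvalue λ_W, and let x, y ∈ ℝ^N satisfy x − y ∈ Range(W) and ‖x − y‖ ≤ R. Then F(x) − F(y) ≤ (R/√λ_W) · ‖∇F(x)‖_W, where ‖v‖_W := √(vᵀWv). -/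
/-!
Convexity gives `F x - F y ≤ ⟪∇F x, x - y⟫`. Write `x - y = W u`. Cauchy–Schwarz for the
positive semidefinite form `⟪·, W ·⟫` gives `⟪∇F x, W u⟫² ≤ ‖∇F x‖_W² ⟪u, W u⟫`, and in an
eigenbasis of `W` each eigenvalue satisfies `λ_W μ ≤ μ²` (trivially when `μ = 0`), whence
`λ_W ⟪u, W u⟫ ≤ ‖W u‖² = ‖x - y‖²`.
-/

open RealInnerProductSpace

theorem ConvexOn.apply_sub_le_sub_of_hasFDerivAt {V : Type*} [NormedAddCommGroup V]
    [NormedSpace ℝ V] {F : V → ℝ} {s : Set V} {f' : V →L[ℝ] ℝ}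
    {x y : V} (hF : ConvexOn ℝ s F) (hx : x ∈ s) (hy : y ∈ s) (hf' : HasFDerivAt F f' x) :
    f' (y - x) ≤ F y - F x := by
  have hline : HasDerivAt (AffineMap.lineMap x y : ℝ → V) (y - x) 0 := by
    simpa using AffineMap.hasDerivAt_lineMap (a := x) (b := y) (x := (0 : ℝ))
  have hF' : HasFDerivAt F f' (AffineMap.lineMap x y (0 : ℝ)) := by simpa using hf'
  simpa [slope] using (hF.comp_affineMap (AffineMap.lineMap x y)).le_slope_of_hasDerivAt
    (x := 0) (y := 1) (by simpa using hx) (by simpa using hy) one_pos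
    (hF'.comp_hasDerivAt (0 : ℝ) hline)

section

variable {E : Type*} [NormedAddCommGroup E] [InnerProductSpace ℝ E]

theorem LinearMap.IsPositive.inner_map_sq_le {T : E →ₗ[ℝ] E} (hT : T.IsPositive) (x y : E) :
    ⟪x, T y⟫ ^ 2 ≤ ⟪x, T x⟫ * ⟪y, T y⟫ := by
  have hquad : ∀ t : ℝ, 0 ≤ ⟪y, T y⟫ * (t * t) + 2 * ⟪x, T y⟫ * t + ⟪x, T x⟫ := fun t ↦ by
    have := hT.inner_nonneg_right (x + t • y)
    rw [map_add, map_smul, inner_add_left, inner_add_right, inner_add_right, real_inner_smul_left,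
      real_inner_smul_right, real_inner_smul_right, real_inner_smul_left, ← hT.isSymmetric y x,
      real_inner_comm x (T y)] at this
    linarith
  have := discrim_le_zero hquad
  rw [discrim] at this
  nlinarith [this]

theorem LinearMap.IsPositive.mul_inner_map_self_le_norm_map_sq [FiniteDimensional ℝ E]
    {T : E →ₗ[ℝ] E} (hT : T.IsPositive) {lam : ℝ}
    (hlam : ∀ μ, μ ≠ 0 → Module.End.HasEigenvalue T μ → lam ≤ μ) (u : E) :
    lam * ⟪u, T u⟫ ≤ ‖T u‖ ^ 2 := by
  set b := hT.isSymmetric.eigenvectorBasis rfl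
  set μ := hT.isSymmetric.eigenvalues rfl
  have hrepr : ∀ i, b.repr (T u) i = μ i * b.repr u i :=
    hT.isSymmetric.eigenvectorBasis_apply_self_apply rfl u
  rw [← b.repr.inner_map_map, ← b.repr.norm_map, EuclideanSpace.norm_sq_eq, PiLp.inner_apply,
    Finset.mul_sum]
  refine Finset.sum_le_sum fun i _ ↦ ?_
  rw [hrepr, real_inner_eq_re_inner, RCLike.re_to_real, RCLike.inner_apply, conj_trivial,
    Real.norm_eq_abs, sq_abs]
  rcases eq_or_ne (μ i) 0 with h0 | h0
  · simp [h0]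
  · have hle := hlam _ h0 (hT.isSymmetric.hasEigenvalue_eigenvalues rfl i)
    have := hT.nonneg_eigenvalues rfl i
    nlinarith [sq_nonneg (b.repr u i), mul_le_mul_of_nonneg_right hle this]

theorem LinearMap.IsPositive.inner_le_of_mem_range [FiniteDimensional ℝ E]
    {T : E →ₗ[ℝ] E} (hT : T.IsPositive) {lam : ℝ} (hlam_pos : 0 < lam)
    (hlam : ∀ μ, μ ≠ 0 → Module.End.HasEigenvalue T μ → lam ≤ μ) {v : E}
    (hv : v ∈ LinearMap.range T) (g : E) :
    ⟪g, v⟫ ≤ ‖v‖ / √lam * √⟪g, T g⟫ := by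
  obtain ⟨u, rfl⟩ := hv
  have hgg := hT.inner_nonneg_right g
  have hsq : (⟪g, T u⟫ * √lam) ^ 2 ≤ (‖T u‖ * √⟪g, T g⟫) ^ 2 := calc
    (⟪g, T u⟫ * √lam) ^ 2 = ⟪g, T u⟫ ^ 2 * lam := by rw [mul_pow, Real.sq_sqrt hlam_pos.le]
    _ ≤ ⟪g, T g⟫ * ⟪u, T u⟫ * lam := by gcongr; exact hT.inner_map_sq_le g u
    _ = ⟪g, T g⟫ * (lam * ⟪u, T u⟫) := by ring
    _ ≤ ⟪g, T g⟫ * ‖T u‖ ^ 2 := by gcongr; exact hT.mul_inner_map_self_le_norm_map_sq hlam u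
    _ = (‖T u‖ * √⟪g, T g⟫) ^ 2 := by rw [mul_pow, Real.sq_sqrt hgg, mul_comm]
  rw [div_mul_eq_mul_div, le_div_iff₀ (Real.sqrt_pos.mpr hlam_pos)]
  exact (abs_le_of_sq_le_sq' hsq (by positivity)).2

end

theorem stmt_19_general (N : ℕ) (F : EuclideanSpace ℝ (Fin N) → ℝ)
    (hconv : ConvexOn ℝ Set.univ F) (hdiff : Differentiable ℝ F)
    (W : Matrix (Fin N) (Fin N) ℝ)
    (hpsd : W.PosSemidef)
    (lamW : ℝ)
    (hlamW : IsLeast {μ : ℝ | μ ≠ 0 ∧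
      Module.End.HasEigenvalue (Matrix.toEuclideanLin W) μ} lamW)
    (x y : EuclideanSpace ℝ (Fin N)) (R : ℝ)
    (hxy : x - y ∈ LinearMap.range (Matrix.toEuclideanLin W))
    (hR : ‖x - y‖ ≤ R) :
    F x - F y ≤ (R / Real.sqrt lamW) *
      Real.sqrt ⟪gradient F x, Matrix.toEuclideanLin W (gradient F x)⟫ := by
  have hT : (Matrix.toEuclideanLin W).IsPositive := Matrix.isPositive_toEuclideanLin_iff.mpr hpsd
  obtain ⟨⟨hlam_ne, hlam_eig⟩, hlam_least⟩ := hlamW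
  have hlam_pos : 0 < lamW :=
    (eigenvalue_nonneg_of_nonneg hlam_eig hT.re_inner_nonneg_right).lt_of_ne' hlam_ne
  have hgap : F x - F y ≤ ⟪gradient F x, x - y⟫ := by
    have := hconv.apply_sub_le_sub_of_hasFDerivAt (Set.mem_univ x) (Set.mem_univ y)
      (hasGradientAt_iff_hasFDerivAt.mp (hdiff x).hasGradientAt)
    rw [InnerProductSpace.toDual_apply_apply, ← neg_sub x y, inner_neg_right] at this
    linarith
  calc F x - F y ≤ ⟪gradient F x, x - y⟫ := hgap
    _ ≤ ‖x - y‖ / √lamW * √⟪gradient F x, Matrix.toEuclideanLin W (gradient F x)⟫ :=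
      hT.inner_le_of_mem_range hlam_pos (fun μ hμ hμW ↦ hlam_least ⟨hμ, hμW⟩) hxy _
    _ ≤ R / √lamW * √⟪gradient F x, Matrix.toEuclideanLin W (gradient F x)⟫ := by gcongr

/-- convex gap bound in the `W`-seminorm.
`F` convex and differentiable, `W` a nonzero symmetric PSD matrix with smallest
nonzero eigenvalue `λ_W`, `x − y ∈ Range W` and `‖x − y‖ ≤ R`.  Then
`F x − F y ≤ (R / √λ_W) ‖∇F x‖_W`, where `‖v‖_W = √(vᵀ W v)`. -/
theorem stmt_19 (N : ℕ) (F : EuclideanSpace ℝ (Fin N) → ℝ)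
    (hconv : ConvexOn ℝ Set.univ F) (hdiff : Differentiable ℝ F)
    (W : Matrix (Fin N) (Fin N) ℝ)
    (hsymm : W.IsSymm) (hpsd : W.PosSemidef) (hW0 : W ≠ 0)
    (lamW : ℝ)
    (hlamW : IsLeast {μ : ℝ | μ ≠ 0 ∧
      Module.End.HasEigenvalue (Matrix.toEuclideanLin W) μ} lamW)
    (x y : EuclideanSpace ℝ (Fin N)) (R : ℝ)
    (hxy : x - y ∈ LinearMap.range (Matrix.toEuclideanLin W))
    (hR : ‖x - y‖ ≤ R) :
    F x - F y ≤ (R / Real.sqrt lamW) *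
      Real.sqrt ⟪gradient F x, Matrix.toEuclideanLin W (gradient F x)⟫ :=
  stmt_19_general N F hconv hdiff W hpsd lamW hlamW x y R hxy hR
end
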